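/- arXiv:1312.7477 — 5 statements merged into one kernel-verified Lean document; each statement's English description precedes it below -/
import Mathlib

section
/- Let n ≥ 1 and r > 0 with 2·r·n = 1 (exact covering, excess zero). Then Cov_I(n,r) is exactly the set of n! configurations obtained by permuting the evenly spaced centers r, 3r, …, (2n−1)r: namely Cov_I(n,r) = { x : Fin n → ℝ | ∃ σ ∈ Equiv.Perm (Fin n), ∀ i, x i = (2·(σ i : ℕ) + 1)·r }. In particular Cov_I(n,r) is a finite set with exactly n! elements. -/
/-!
Sort the centres increasingly. By induction on `k`, the first `k` intervals end at or before `2kr`;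
if the `k`-th centre exceeded `(2k+1) r`, a point just right of `2kr` would lie beyond them and
left of all the later intervals, hence be uncovered. So the `k`-th centre is at most `(2k+1) r`.
Applied to the mirror image `1 - x`, this gives the matching lower bound once `2rn = 1`.
-/

/-- The covering configuration space of `n` labelled radius-`r` intervals on `[0,1]`. -/
def CovI (n : ℕ) (r : ℝ) : Set (Fin n → ℝ) :=
  {x | (∀ i, Set.Icc (x i - r) (x i + r) ⊆ Set.Icc 0 1) ∧
    Set.Icc (0 : ℝ) 1 ⊆ ⋃ i, Set.Icc (x i - r) (x i + r)}

open Set Function Equiv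

def evenCenters (n : ℕ) (r : ℝ) (k : Fin n) : ℝ := (2 * (k : ℕ) + 1) * r

variable {n : ℕ} {r : ℝ}

lemma pos_of_two_mul_mul_natCast_eq_one (hex : 2 * r * n = 1) : 0 < r := by
  by_contra! hr
  nlinarith [n.cast_nonneg (α := ℝ)]

namespace CovI

variable {x : Fin n → ℝ}

lemma sub_nonneg_and_add_le_one (hr : 0 ≤ r) (hx : x ∈ CovI n r) (i : Fin n) :
    0 ≤ x i - r ∧ x i + r ≤ 1 :=
  ⟨(hx.1 i ⟨le_rfl, by linarith⟩).1, (hx.1 i ⟨by linarith, le_rfl⟩).2⟩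

lemma exists_sub_le_and_le_add (hx : x ∈ CovI n r) {t : ℝ} (h0 : 0 ≤ t) (h1 : t ≤ 1) :
    ∃ j, x j - r ≤ t ∧ t ≤ x j + r :=
  mem_iUnion.1 (hx.2 ⟨h0, h1⟩)

lemma comp_perm (hx : x ∈ CovI n r) (σ : Perm (Fin n)) : x ∘ σ ∈ CovI n r :=
  ⟨fun i => hx.1 (σ i), by
    simpa only [comp_apply, σ.surjective.iUnion_comp fun i => Icc (x i - r) (x i + r)]
      using hx.2⟩

lemma one_sub (hx : x ∈ CovI n r) : (fun i => 1 - x i) ∈ CovI n r := by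
  refine ⟨fun i u hu => ?_, fun t ht => ?_⟩
  · obtain ⟨hu₁, hu₂⟩ := hu
    have := hx.1 i (show 1 - u ∈ Icc (x i - r) (x i + r) from ⟨by linarith, by linarith⟩)
    exact ⟨by linarith [this.2], by linarith [this.1]⟩
  · obtain ⟨h0, h1⟩ := ht
    obtain ⟨j, hj₁, hj₂⟩ :=
      exists_sub_le_and_le_add hx (t := 1 - t) (by linarith) (by linarith)
    exact mem_iUnion.2 ⟨j, by linarith, by linarith⟩

lemma le_evenCenters_of_monotone (hr : 0 ≤ r) (hx : x ∈ CovI n r) (hmono : Monotone x)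
    (k : Fin n) : x k ≤ evenCenters n r k := by
  induction k using WellFoundedLT.induction with
  | _ k ih =>
  unfold evenCenters at ih ⊢
  by_contra! hlt
  have hk : (0 : ℝ) ≤ 2 * (k : ℕ) * r := by positivity
  have hxk := sub_nonneg_and_add_le_one hr hx k
  set t := (2 * (k : ℕ) * r + (x k - r)) / 2 with ht
  obtain ⟨j, hj₁, hj₂⟩ := exists_sub_le_and_le_add hx (t := t) (by linarith) (by linarith)
  rcases lt_or_ge j k with hjk | hkj
  · have hjk' : ((j : ℕ) : ℝ) + 1 ≤ (k : ℕ) := by exact_mod_cast hjk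
    nlinarith [ih j hjk]
  · linarith [hmono hkj]

lemma eq_evenCenters_of_monotone (hex : 2 * r * n = 1) (hx : x ∈ CovI n r)
    (hmono : Monotone x) : x = evenCenters n r := by
  have hr := (pos_of_two_mul_mul_natCast_eq_one hex).le
  funext k
  refine le_antisymm (le_evenCenters_of_monotone hr hx hmono k) ?_
  have hrev : (fun i => 1 - x (Fin.rev i)) ∈ CovI n r := one_sub (comp_perm hx Fin.revPerm)
  have hmono_rev : Monotone fun i => 1 - x (Fin.rev i) :=
    fun a b hab => sub_le_sub_left (hmono (Fin.rev_le_rev.2 hab)) 1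
  have := le_evenCenters_of_monotone hr hrev hmono_rev (Fin.rev k)
  have hcast : (((Fin.rev k : Fin n) : ℕ) : ℝ) = n - (k + 1) := by
    rw [Fin.val_rev, Nat.cast_sub (by omega)]
    push_cast; ring
  simp only [evenCenters, Fin.rev_rev, hcast] at this ⊢
  linear_combination this + hex

end CovI

lemma exists_nat_lt_le_and_le_add_one (hn : 0 < n) {s : ℝ} (h0 : 0 ≤ s) (hs : s ≤ n) :
    ∃ k < n, (k : ℝ) ≤ s ∧ s ≤ k + 1 := by
  rcases lt_or_ge s n with hlt | hge
  · refine ⟨⌊s⌋₊, Nat.floor_lt h0 |>.2 hlt, Nat.floor_le h0, (Nat.lt_floor_add_one s).le⟩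
  · refine ⟨n - 1, by omega, ?_, ?_⟩ <;> push_cast [Nat.cast_sub hn] <;> linarith

lemma evenCenters_injective (hr : r ≠ 0) : Injective (evenCenters n r) := by
  intro i j h
  simp only [evenCenters, mul_left_inj' hr] at h
  exact Fin.ext (by exact_mod_cast (by linarith : ((i : ℕ) : ℝ) = j))

lemma evenCenters_mem_covI (hex : 2 * r * n = 1) : evenCenters n r ∈ CovI n r := by
  have hr := pos_of_two_mul_mul_natCast_eq_one hex
  have hn : 0 < n := Nat.pos_of_ne_zero (by rintro rfl; simp at hex)
  refine ⟨fun k u ⟨hu₁, hu₂⟩ => ?_, fun t ⟨h0, h1⟩ => ?_⟩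
  · have hkn : ((k : ℕ) : ℝ) + 1 ≤ n := by exact_mod_cast k.isLt
    simp only [evenCenters] at hu₁ hu₂
    constructor <;> nlinarith
  · obtain ⟨k, hkn, hk₁, hk₂⟩ :=
      exists_nat_lt_le_and_le_add_one hn (s := t * n) (by positivity) (by nlinarith)
    refine mem_iUnion.2 ⟨⟨k, hkn⟩, ?_, ?_⟩ <;> simp only [evenCenters] <;> nlinarith

lemma covI_eq_range_evenCenters_comp (hex : 2 * r * n = 1) :
    CovI n r = range fun σ : Perm (Fin n) => evenCenters n r ∘ σ := by
  ext x
  constructor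
  · intro hx
    have hsorted := CovI.eq_evenCenters_of_monotone hex (CovI.comp_perm hx (Tuple.sort x))
      (Tuple.monotone_sort x)
    refine ⟨(Tuple.sort x)⁻¹, ?_⟩
    rw [← hsorted]
    ext i
    simp
  · rintro ⟨σ, rfl⟩
    exact CovI.comp_perm (evenCenters_mem_covI hex) σ

theorem covI_exact_covering_general (n : ℕ) (r : ℝ)
    (hex : 2 * r * n = 1) :
    CovI n r = {x : Fin n → ℝ | ∃ σ : Equiv.Perm (Fin n),
        ∀ i, x i = (2 * ((σ i : ℕ) : ℝ) + 1) * r} ∧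
      (CovI n r).Finite ∧ (CovI n r).ncard = n.factorial := by
  have hinj : Injective fun σ : Perm (Fin n) => evenCenters n r ∘ σ :=
    (evenCenters_injective (pos_of_two_mul_mul_natCast_eq_one hex).ne').comp_left.comp
      DFunLike.coe_injective
  rw [covI_eq_range_evenCenters_comp hex]
  refine ⟨?_, finite_range _, ?_⟩
  · ext x
    simp only [mem_range, mem_ofPred_eq, funext_iff, comp_apply, evenCenters, eq_comm]
  · rw [ncard_range_of_injective hinj, Nat.card_perm, Nat.card_eq_fintype_card, Fintype.card_fin]

theorem covI_exact_covering (n : ℕ) (hn : 1 ≤ n) (r : ℝ) (hr : 0 < r)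
    (hex : 2 * r * n = 1) :
    CovI n r = {x : Fin n → ℝ | ∃ σ : Equiv.Perm (Fin n),
        ∀ i, x i = (2 * ((σ i : ℕ) : ℝ) + 1) * r} ∧
      (CovI n r).Finite ∧ (CovI n r).ncard = n.factorial :=
  covI_exact_covering_general n r hex
end

section
/- The covering configuration space Cov_I(3, 1/4) is homotopy equivalent to the circle: there exists a homotopy equivalence (ContinuousMap.HomotopyEquiv) between the subspace Cov_I(3,1/4) of Fin 3 → ℝ and the unit circle in ℂ. -/
namespace CovIHex

noncomputable section
open Complex

lemma mem_covI_iff (x : Fin 3 → ℝ) :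
    x ∈ CovI 3 (1/4) ↔ (∀ i, 1/4 ≤ x i ∧ x i ≤ 3/4) ∧ (∃ i, x i = 1/4) ∧ (∃ i, x i = 3/4) := by
  constructor
  · rintro ⟨h1, h2⟩
    have hb : ∀ i, 1/4 ≤ x i ∧ x i ≤ 3/4 := by
      intro i
      have := (Set.Icc_subset_Icc_iff (by linarith : x i - 1/4 ≤ x i + 1/4)).1 (h1 i)
      constructor <;> linarith [this.1, this.2]
    refine ⟨hb, ?_, ?_⟩
    · have h0 : (0:ℝ) ∈ ⋃ i, Set.Icc (x i - 1/4) (x i + 1/4) :=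
        h2 ⟨le_refl 0, by norm_num⟩
      obtain ⟨i, hi⟩ := Set.mem_iUnion.1 h0
      exact ⟨i, le_antisymm (by linarith [hi.1]) (hb i).1⟩
    · have h0 : (1:ℝ) ∈ ⋃ i, Set.Icc (x i - 1/4) (x i + 1/4) :=
        h2 ⟨by norm_num, le_refl 1⟩
      obtain ⟨i, hi⟩ := Set.mem_iUnion.1 h0
      exact ⟨i, le_antisymm (hb i).2 (by linarith [hi.2])⟩
  · rintro ⟨hb, ⟨i0, hi0⟩, ⟨i1, hi1⟩⟩
    constructor
    · intro i
      apply Set.Icc_subset_Icc <;> [linarith [(hb i).1]; linarith [(hb i).2]]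
    · intro t ht
      rcases le_total t (1/2 : ℝ) with h | h
      · exact Set.mem_iUnion.2 ⟨i0, by rw [hi0]; constructor <;> [linarith [ht.1]; linarith]⟩
      · exact Set.mem_iUnion.2 ⟨i1, by rw [hi1]; constructor <;> [linarith; linarith [ht.2]]⟩

/-- Projection of ℝ³ to the plane orthogonal to (1,1,1), as ℂ. -/
def P (x : Fin 3 → ℝ) : ℂ := ⟨x 0 - x 1, x 1 - x 2⟩

@[simp] lemma P_re (x : Fin 3 → ℝ) : (P x).re = x 0 - x 1 := rfl
@[simp] lemma P_im (x : Fin 3 → ℝ) : (P x).im = x 1 - x 2 := rfl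

lemma continuous_P : Continuous P := by
  have h : P = fun x => ((x 0 - x 1 : ℝ) : ℂ) + (x 1 - x 2 : ℝ) * Complex.I :=
    funext fun x => Complex.mk_eq_add_mul_I _ _
  rw [h]
  fun_prop

lemma P_ne_zero {x : Fin 3 → ℝ} (hx : x ∈ CovI 3 (1/4)) : P x ≠ 0 := by
  rw [mem_covI_iff] at hx
  obtain ⟨hb, ⟨i0, hi0⟩, ⟨i1, hi1⟩⟩ := hx
  intro h
  rw [Complex.ext_iff] at h
  simp only [P_re, P_im, Complex.zero_re, Complex.zero_im] at h
  have e01 : x 0 = x 1 := by linarith [h.1]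
  have e12 : x 1 = x 2 := by linarith [h.2]
  fin_cases i0 <;> fin_cases i1 <;> simp_all <;> linarith

def mz (z : ℂ) : ℝ := min (min (z.re + z.im) z.im) 0
def Mz (z : ℂ) : ℝ := max (max (z.re + z.im) z.im) 0

lemma mz_lt_Mz {z : ℂ} (hz : z ≠ 0) : mz z < Mz z := by
  rcases lt_or_ge (mz z) (Mz z) with h | h
  · exact h
  exfalso
  have h1 : mz z ≤ 0 := min_le_right _ _
  have h2 : (0:ℝ) ≤ Mz z := le_max_right _ _
  have h3 : mz z ≤ z.im := le_trans (min_le_left _ _) (min_le_right _ _)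
  have h4 : z.im ≤ Mz z := le_trans (le_max_right _ _) (le_max_left _ _)
  have h5 : mz z ≤ z.re + z.im := le_trans (min_le_left _ _) (min_le_left _ _)
  have h6 : z.re + z.im ≤ Mz z := le_trans (le_max_left _ _) (le_max_left _ _)
  apply hz
  rw [Complex.ext_iff]
  constructor <;> simp <;> linarith

def q (z : ℂ) : Fin 3 → ℝ := ![z.re + z.im, z.im, 0]

/-- The inverse map: from a nonzero complex direction to the hexagon. -/
def g (z : ℂ) : Fin 3 → ℝ := fun i => (q z i - mz z) / (2 * (Mz z - mz z)) + 1/4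

lemma g_mem {z : ℂ} (hz : z ≠ 0) : g z ∈ CovI 3 (1/4) := by
  have hd : 0 < Mz z - mz z := sub_pos.2 (mz_lt_Mz hz)
  have hq1 : ∀ i, mz z ≤ q z i ∧ q z i ≤ Mz z := by
    intro i
    fin_cases i <;> constructor <;> simp [q, mz, Mz]
  rw [mem_covI_iff]
  refine ⟨?_, ?_, ?_⟩
  · intro i
    have h1 := (hq1 i).1
    have h2 := (hq1 i).2
    have h3 : 0 ≤ (q z i - mz z) / (2 * (Mz z - mz z)) :=
      div_nonneg (by linarith) (by linarith)
    have h4 : (q z i - mz z) / (2 * (Mz z - mz z)) ≤ 1/2 := by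
      rw [div_le_iff₀ (by linarith)]
      linarith
    constructor <;> simp only [g] <;> linarith
  · -- some coordinate achieves the min
    have : ∃ i, q z i = mz z := by
      rcases min_cases (min (z.re + z.im) z.im) 0 with ⟨h, _⟩ | ⟨h, _⟩
      · rcases min_cases (z.re + z.im) z.im with ⟨h', _⟩ | ⟨h', _⟩
        · exact ⟨0, by show z.re + z.im = mz z; rw [mz, h, h']⟩
        · exact ⟨1, by show z.im = mz z; rw [mz, h, h']⟩
      · exact ⟨2, by show (0:ℝ) = mz z; rw [mz, h]⟩
    obtain ⟨i, hi⟩ := this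
    exact ⟨i, by simp [g, hi]⟩
  · have : ∃ i, q z i = Mz z := by
      rcases max_cases (max (z.re + z.im) z.im) 0 with ⟨h, _⟩ | ⟨h, _⟩
      · rcases max_cases (z.re + z.im) z.im with ⟨h', _⟩ | ⟨h', _⟩
        · exact ⟨0, by show z.re + z.im = Mz z; rw [Mz, h, h']⟩
        · exact ⟨1, by show z.im = Mz z; rw [Mz, h, h']⟩
      · exact ⟨2, by show (0:ℝ) = Mz z; rw [Mz, h]⟩
    obtain ⟨i, hi⟩ := this
    refine ⟨i, ?_⟩
    simp only [g, hi]
    field_simp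
    ring

lemma P_g (z : ℂ) : P (g z) = ((2 * (Mz z - mz z))⁻¹ : ℝ) • z := by
  apply Complex.ext <;>
    · simp only [P_re, P_im, Complex.smul_re, Complex.smul_im, smul_eq_mul, g, q,
        Matrix.cons_val_zero, Matrix.cons_val_one, Matrix.head_cons,
        Matrix.cons_val_two, Matrix.tail_cons]
      ring


lemma two_Mz_sub_mz_ne {z : ℂ} (hz : z ≠ 0) : 2 * (Mz z - mz z) ≠ 0 := by
  have := mz_lt_Mz hz
  exact ne_of_gt (by linarith)

/-- Forward map to the circle. -/
def fC (x : CovI 3 (1/4)) : Circle :=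
  ⟨P x.1 / (‖P x.1‖ : ℝ), by
    have h : P x.1 ≠ 0 := P_ne_zero x.2
    have hn : ‖P x.1‖ ≠ 0 := norm_ne_zero_iff.2 h
    refine mem_sphere_zero_iff_norm.2 ?_
    rw [norm_div, Complex.norm_real, Real.norm_eq_abs, _root_.abs_of_nonneg (norm_nonneg _),
      div_self hn]⟩

/-- Inverse map from the circle. -/
def gC (z : Circle) : CovI 3 (1/4) := ⟨g z, g_mem z.coe_ne_zero⟩

lemma fC_gC (z : Circle) : fC (gC z) = z := by
  have hc : (0:ℝ) < 2 * (Mz (z:ℂ) - mz (z:ℂ)) := by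
    have := mz_lt_Mz z.coe_ne_zero; linarith
  apply Circle.ext
  show P (g (z:ℂ)) / (‖P (g (z:ℂ))‖ : ℝ) = (z : ℂ)
  rw [P_g]
  rw [norm_smul]
  have hz1 : ‖(z:ℂ)‖ = 1 := mem_sphere_zero_iff_norm.1 z.2
  rw [hz1, mul_one, Real.norm_eq_abs, _root_.abs_of_pos (inv_pos.2 hc)]
  rw [Complex.real_smul]
  have h0 : (((2 * (Mz (z:ℂ) - mz (z:ℂ)))⁻¹ : ℝ) : ℂ) ≠ 0 := by
    simp only [ne_eq, Complex.ofReal_eq_zero, inv_eq_zero]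
    exact hc.ne'
  rw [mul_comm, mul_div_assoc, div_self h0, mul_one]

lemma gC_fC (x : CovI 3 (1/4)) : gC (fC x) = x := by
  obtain ⟨x, hx⟩ := x
  have hmem := (mem_covI_iff x).1 hx
  obtain ⟨hb, ⟨i0, hi0⟩, ⟨i1, hi1⟩⟩ := hmem
  have hP : P x ≠ 0 := P_ne_zero hx
  set r : ℝ := ‖P x‖ with hr
  have hr0 : 0 < r := norm_pos_iff.2 hP
  apply Subtype.ext
  show g ((P x) / (r:ℝ)) = x
  set w : ℂ := P x / (r:ℝ) with hw
  have hwre : w.re = (x 0 - x 1) / r := by rw [hw, Complex.div_ofReal_re, P_re]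
  have hwim : w.im = (x 1 - x 2) / r := by rw [hw, Complex.div_ofReal_im, P_im]
  have hsum : w.re + w.im = (x 0 - x 2) / r := by rw [hwre, hwim]; ring
  have hmz : mz w = (1/4 - x 2) / r := by
    apply le_antisymm
    · fin_cases i0
      · have h0 : x 0 = 1/4 := hi0
        calc mz w ≤ w.re + w.im := le_trans (min_le_left _ _) (min_le_left _ _)
          _ = (1/4 - x 2) / r := by rw [hsum, h0]
      · have h0 : x 1 = 1/4 := hi0
        calc mz w ≤ w.im := le_trans (min_le_left _ _) (min_le_right _ _)
          _ = (1/4 - x 2) / r := by rw [hwim, h0]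
      · have h0 : x 2 = 1/4 := hi0
        calc mz w ≤ 0 := min_le_right _ _
          _ = (1/4 - x 2) / r := by rw [h0]; simp
    · refine le_min (le_min ?_ ?_) ?_
      · rw [hsum]; gcongr; exact (hb 0).1
      · rw [hwim]; gcongr; exact (hb 1).1
      · apply div_nonpos_of_nonpos_of_nonneg <;> linarith [(hb 2).1]
  have hMz : Mz w = (3/4 - x 2) / r := by
    apply le_antisymm
    · refine max_le (max_le ?_ ?_) ?_
      · rw [hsum]; gcongr; exact (hb 0).2
      · rw [hwim]; gcongr; exact (hb 1).2
      · apply div_nonneg ?_ hr0.le; linarith [(hb 2).2]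
    · fin_cases i1
      · have h1 : x 0 = 3/4 := hi1
        calc (3/4 - x 2) / r = w.re + w.im := by rw [hsum, h1]
          _ ≤ Mz w := le_trans (le_max_left _ _) (le_max_left _ _)
      · have h1 : x 1 = 3/4 := hi1
        calc (3/4 - x 2) / r = w.im := by rw [hwim, h1]
          _ ≤ Mz w := le_trans (le_max_right _ _) (le_max_left _ _)
      · have h1 : x 2 = 3/4 := hi1
        calc (3/4 - x 2) / r = 0 := by rw [h1]; simp
          _ ≤ Mz w := le_max_right _ _
  funext i
  have hd : (0:ℝ) < 2 * (Mz w - mz w) := by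
    rw [hmz, hMz]
    have : (3/4 - x 2) / r - (1/4 - x 2) / r = (1/2) / r := by ring
    rw [this]; positivity
  fin_cases i
  · show (q w 0 - mz w) / (2 * (Mz w - mz w)) + 1/4 = x 0
    have hq0 : q w 0 = (x 0 - x 2) / r := hsum
    rw [hq0, hmz, hMz]
    field_simp
    ring
  · show (q w 1 - mz w) / (2 * (Mz w - mz w)) + 1/4 = x 1
    have hq1 : q w 1 = (x 1 - x 2) / r := hwim
    rw [hq1, hmz, hMz]
    field_simp
    ring
  · show (q w 2 - mz w) / (2 * (Mz w - mz w)) + 1/4 = x 2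
    have hq2 : q w 2 = 0 := rfl
    rw [hq2, hmz, hMz]
    field_simp
    ring

lemma continuous_fC : Continuous fC := by
  apply Continuous.subtype_mk
  apply Continuous.div
  · exact continuous_P.comp continuous_subtype_val
  · exact Complex.continuous_ofReal.comp
      ((continuous_P.comp continuous_subtype_val).norm)
  · intro x
    simp only [ne_eq, Complex.ofReal_eq_zero, norm_eq_zero]
    exact P_ne_zero x.2

lemma continuous_gC : Continuous gC := by
  apply Continuous.subtype_mk
  apply continuous_pi
  intro i
  have hre : Continuous fun z : Circle => (z:ℂ).re :=
    Complex.continuous_re.comp continuous_subtype_val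
  have him : Continuous fun z : Circle => (z:ℂ).im :=
    Complex.continuous_im.comp continuous_subtype_val
  have hmz : Continuous fun z : Circle => mz (z:ℂ) :=
    ((hre.add him).min him).min continuous_const
  have hMz : Continuous fun z : Circle => Mz (z:ℂ) :=
    ((hre.add him).max him).max continuous_const
  have hq : Continuous fun z : Circle => q (z:ℂ) i := by
    fin_cases i
    · exact hre.add him
    · exact him
    · exact continuous_const
  have hne : ∀ z : Circle, 2 * (Mz (z:ℂ) - mz (z:ℂ)) ≠ 0 :=
    fun z => two_Mz_sub_mz_ne z.coe_ne_zero
  exact ((hq.sub hmz).div (continuous_const.mul (hMz.sub hmz)) hne).add continuous_const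

/-- The homeomorphism between the covering space and the circle. -/
def hexHomeo : (CovI 3 (1/4)) ≃ₜ Circle where
  toFun := fC
  invFun := gC
  left_inv := gC_fC
  right_inv := fC_gC
  continuous_toFun := continuous_fC
  continuous_invFun := continuous_gC

end
end CovIHex

theorem covI_three_quarter_homotopyEquiv_circle :
    Nonempty (ContinuousMap.HomotopyEquiv (CovI 3 (1 / 4)) Circle) := by
  exact ⟨CovIHex.hexHomeo.toHomotopyEquiv⟩
end

section
/- Let n ≥ 2 and r > 0 satisfy 2·r·(n−1) ≥ 1, 2·r·(n−2) < 1, and 2·r ≤ 1 (so the minimal number of radius-r intervals needed to cover [0,1] is n−1, i.e. there is exactly one excess agent). Then Cov_I(n,r) is homotopy equivalent to P_n, the geometric 1-skeleton of the permutahedron Π_{n−1}: there exists a homotopy equivalence between the subspace Cov_I(n,r) and the subspace P_n of Fin n → ℝ. -/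
/-- The vertex of the permutahedron corresponding to the permutation `σ`. -/
def permVec {n : ℕ} (σ : Equiv.Perm (Fin n)) : Fin n → ℝ :=
  fun i => ((σ i : ℕ) : ℝ) + 1

/-- The geometric 1-skeleton of the permutahedron `Π_{n-1}` in `Fin n → ℝ`:
the union of the edges joining `permVec σ` to `permVec (swap k (k+1) * σ)`. -/
def permSkel1 (n : ℕ) : Set (Fin n → ℝ) :=
  ⋃ (σ : Equiv.Perm (Fin n)) (k : ℕ) (h : k + 1 < n),
    segment ℝ (permVec σ)
      (permVec (Equiv.swap (⟨k, Nat.lt_of_succ_lt h⟩ : Fin n) (⟨k + 1, h⟩ : Fin n) * σ))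

theorem ContinuousMap.homotopic_of_segment_subset {X E : Type*} [TopologicalSpace X]
    [AddCommGroup E] [TopologicalSpace E] [IsTopologicalAddGroup E] [Module ℝ E]
    [ContinuousSMul ℝ E] {s : Set E} (f g : C(X, s))
    (h : ∀ x, segment ℝ (f x : E) (g x) ⊆ s) : f.Homotopic g := by
  let val : C(s, E) := ⟨Subtype.val, continuous_subtype_val⟩
  let H := Homotopy.affine (val.comp f) (val.comp g)
  refine ⟨{ toFun := fun p => ⟨H p, h p.2 ?_⟩
            continuous_toFun := H.continuous.subtype_mk _
            map_zero_left := fun x => Subtype.ext (H.apply_zero x)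
            map_one_left := fun x => Subtype.ext (H.apply_one x) }⟩
  rw [segment_eq_image_lineMap]
  exact ⟨p.1, p.1.2, rfl⟩

lemma sum_range_ite_lt {n p : ℕ} (hp : p ≤ n) :
    ∑ q ∈ Finset.range n, (if q < p then (1 : ℝ) else 0) = p := by
  rw [Finset.sum_boole, Finset.range_eq_Ico, Finset.Ico_filter_lt, min_eq_right hp]
  simp

lemma abs_sub_round_of_abs_le {s : ℝ} (hs : |s| ≤ 1 / 2) : |s - round s| = |s| := by
  refine le_antisymm (by simpa using round_le s 0) ?_
  rcases eq_or_ne (round s) 0 with h | h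
  · simp [h]
  · have : (1 : ℝ) ≤ |(round s : ℝ)| := by exact_mod_cast Int.one_le_abs h
    linarith [abs_sub_abs_le_abs_sub (round s : ℝ) s, abs_sub_comm s (round s : ℝ)]

lemma monotoneOn_Iio_of_le_add_one {α : Type*} [Preorder α] {n : ℕ} {y : ℕ → α}
    (h : ∀ p, p + 1 < n → y p ≤ y (p + 1)) : MonotoneOn y (Set.Iio n) :=
  monotoneOn_of_le_succ Set.ordConnected_Iio fun p _ _ hp => by
    rw [Order.succ_eq_add_one] at hp ⊢
    exact h p hp

namespace ExcessOne

variable {n k : ℕ} {r ε t : ℝ} {y : ℕ → ℝ}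

/-! ### Smoothed ranks -/

noncomputable def ramp (ε d : ℝ) : ℝ := max 0 (min 1 (1 / 2 + d / (2 * ε)))

lemma ramp_nonneg (d : ℝ) : 0 ≤ ramp ε d := le_max_left _ _

lemma ramp_zero : ramp ε 0 = 1 / 2 := by norm_num [ramp]

lemma ramp_of_le (hε : 0 < ε) {d : ℝ} (h : ε ≤ d) : ramp ε d = 1 := by
  have : 1 ≤ 1 / 2 + d / (2 * ε) := by
    rw [← sub_le_iff_le_add', le_div_iff₀ (by positivity)]; linarith
  rw [ramp, min_eq_left this, max_eq_right zero_le_one]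

lemma ramp_of_le_neg (hε : 0 < ε) {d : ℝ} (h : d ≤ -ε) : ramp ε d = 0 := by
  have : 1 / 2 + d / (2 * ε) ≤ 0 := by
    rw [← le_sub_iff_add_le', div_le_iff₀ (by positivity)]; linarith
  rw [ramp, max_eq_left ((min_le_right _ _).trans this)]

lemma ramp_neg (d : ℝ) : ramp ε (-d) = 1 - ramp ε d := by
  simp only [ramp]
  rw [show 1 / 2 + -d / (2 * ε) = 1 - (1 / 2 + d / (2 * ε)) by ring]
  grind

lemma ramp_le_half (hε : 0 ≤ ε) {d : ℝ} (hd : d ≤ 0) : ramp ε d ≤ 1 / 2 := by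
  have : d / (2 * ε) ≤ 0 := div_nonpos_of_nonpos_of_nonneg hd (by positivity)
  simp only [ramp, max_le_iff]
  constructor
  · norm_num
  · exact (min_le_right _ _).trans (by linarith)

lemma ramp_sub_mem_Icc (hε : 0 ≤ ε) {a b : ℝ} (hab : a ≤ b) :
    ramp ε (a - b) ∈ Set.Icc (0 : ℝ) (1 / 2) :=
  ⟨ramp_nonneg _, ramp_le_half hε (by linarith)⟩

lemma continuous_ramp : Continuous (ramp ε) := by
  unfold ramp; fun_prop

/-- The coordinate of rank `p` at parameter `t` along the permutahedron edge that exchanges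
the ranks `k` and `k + 1`. -/
def edgeValue (k : ℕ) (t : ℝ) (p : ℕ) : ℝ :=
  if p = k then k + 1 + t else if p = k + 1 then k + 2 - t else p + 1

def SeparatedExcept (ε : ℝ) (n k : ℕ) (y : ℕ → ℝ) : Prop :=
  ∀ a b, a < b → b < n → (a, b) ≠ (k, k + 1) → y a + ε ≤ y b

lemma separatedExcept_of_gaps (hy : MonotoneOn y (Set.Iio n))
    (hgap : ∀ p, p + 1 < n → p ≠ k → y p + ε ≤ y (p + 1)) :
    SeparatedExcept ε n k y := by
  intro a b hab hb hne
  obtain ⟨j, haj, hjb, hjk⟩ : ∃ j, a ≤ j ∧ j + 1 ≤ b ∧ j ≠ k := by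
    by_cases ha : a = k
    · exact ⟨k + 1, by omega, by simp_all; omega, by omega⟩
    · exact ⟨a, le_rfl, hab, ha⟩
  have := hgap j (by omega) hjk
  have := hy (Set.mem_Iio.2 (by omega)) (Set.mem_Iio.2 (by omega)) haj
  have := hy (Set.mem_Iio.2 (by omega)) (Set.mem_Iio.2 hb) hjb
  linarith

lemma ramp_sub_of_separatedExcept (hε : 0 < ε) (hy : SeparatedExcept ε n k y) {p q : ℕ}
    (hp : p < n) (hq : q < n) :
    ramp ε (y p - y q) = (if q < p then 1 else 0) + (if p = q then 1 / 2 else 0)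
      + (if k + 1 = q then (if p = k then ramp ε (y k - y (k + 1)) else 0) else 0)
      - (if k = q then (if p = k + 1 then ramp ε (y k - y (k + 1)) else 0) else 0) := by
  rcases lt_trichotomy q p with hqp | rfl | hpq
  · by_cases hspecial : q = k ∧ p = k + 1
    · obtain ⟨rfl, rfl⟩ := hspecial
      rw [← neg_sub, ramp_neg]
      simp
    · rw [ramp_of_le hε (by linarith [hy q p hqp hp (by simpa using hspecial)])]
      split_ifs <;> first | omega | simp_all
  · rw [sub_self, ramp_zero]
    split_ifs <;> first | omega | simp
  · by_cases hspecial : p = k ∧ q = k + 1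
    · obtain ⟨rfl, rfl⟩ := hspecial
      simp
    · rw [ramp_of_le_neg hε (by linarith [hy p q hpq hq (by simpa using hspecial)])]
      split_ifs <;> first | omega | simp_all

lemma half_add_sum_ramp_sub (hε : 0 < ε) (hy : SeparatedExcept ε n k y) (hk : k + 1 < n)
    {p : ℕ} (hp : p < n) :
    1 / 2 + ∑ q ∈ Finset.range n, ramp ε (y p - y q) =
      edgeValue k (ramp ε (y k - y (k + 1))) p := by
  rw [Finset.sum_congr rfl fun q hq =>
    ramp_sub_of_separatedExcept hε hy hp (Finset.mem_range.1 hq)]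
  simp only [Finset.sum_add_distrib, Finset.sum_sub_distrib, Finset.sum_ite_eq, Finset.mem_range,
    sum_range_ite_lt hp.le, hp, hk, k.lt_succ_self.trans hk, if_true, edgeValue]
  split_ifs <;> subst_vars <;> first | omega | (push_cast; ring)

/-- With `ε` small, `softRank ε x i` is the rank of `x i` among the coordinates of `x`,
shifted by one and smoothed out near ties. -/
noncomputable def softRank (ε : ℝ) (x : Fin n → ℝ) : Fin n → ℝ :=
  fun i => 1 / 2 + ∑ j, ramp ε (x i - x j)

def edgePoint (σ : Equiv.Perm (Fin n)) (k : ℕ) (t : ℝ) : Fin n → ℝ :=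
  fun i => edgeValue k t (σ i)

lemma continuous_softRank (ε : ℝ) : Continuous (softRank (n := n) ε) := by
  have := continuous_ramp (ε := ε)
  unfold softRank; fun_prop

lemma softRank_eq_edgePoint (hε : 0 < ε) (hy : SeparatedExcept ε n k y) (hk : k + 1 < n)
    (σ : Equiv.Perm (Fin n)) :
    softRank ε (fun i => y (σ i)) = edgePoint σ k (ramp ε (y k - y (k + 1))) := by
  funext i
  rw [softRank, edgePoint, ← half_add_sum_ramp_sub hε hy hk (σ i).isLt,
    Equiv.sum_comp σ fun q => ramp ε (y (σ i) - y q),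
    Fin.sum_univ_eq_sum_range fun q => ramp ε (y (σ i) - y q)]

/-! ### Edges of the permutahedron -/

def adjSwap (k : ℕ) (h : k + 1 < n) : Equiv.Perm (Fin n) :=
  Equiv.swap ⟨k, Nat.lt_of_succ_lt h⟩ ⟨k + 1, h⟩

lemma coe_adjSwap_apply (h : k + 1 < n) (j : Fin n) :
    (adjSwap k h j : ℕ) = Equiv.swap k (k + 1) (j : ℕ) := by
  simp only [adjSwap, Equiv.swap_apply_def, Fin.ext_iff]
  split_ifs <;> rfl

lemma edgeValue_swap (k : ℕ) (t : ℝ) (p : ℕ) :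
    edgeValue k t (Equiv.swap k (k + 1) p) = edgeValue k (1 - t) p := by
  simp only [edgeValue, Equiv.swap_apply_def]
  split_ifs <;> first | omega | (subst_vars; ring)

lemma edgePoint_adjSwap_mul (h : k + 1 < n) (σ : Equiv.Perm (Fin n)) (t : ℝ) :
    edgePoint (adjSwap k h * σ) k t = edgePoint σ k (1 - t) := by
  funext i
  simp only [edgePoint, Equiv.Perm.mul_apply, coe_adjSwap_apply, edgeValue_swap]

lemma edgeValue_zero (k p : ℕ) : edgeValue k 0 p = p + 1 := by
  simp only [edgeValue]
  split_ifs <;> subst_vars <;> push_cast <;> ring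

lemma edgeValue_eq_lineMap (k : ℕ) (t : ℝ) (p : ℕ) :
    edgeValue k t p = (1 - t) * edgeValue k 0 p + t * edgeValue k 1 p := by
  simp only [edgeValue]
  split_ifs <;> ring

lemma edgePoint_zero (σ : Equiv.Perm (Fin n)) (k : ℕ) : edgePoint σ k 0 = permVec σ := by
  funext i
  exact edgeValue_zero k (σ i)

lemma edgePoint_eq_lineMap (h : k + 1 < n) (σ : Equiv.Perm (Fin n)) (t : ℝ) :
    edgePoint σ k t = AffineMap.lineMap (permVec σ) (permVec (adjSwap k h * σ)) t := by
  rw [← edgePoint_zero, ← edgePoint_zero, edgePoint_adjSwap_mul, sub_zero]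
  funext i
  simp only [AffineMap.lineMap_apply_module, Pi.add_apply, Pi.smul_apply, smul_eq_mul]
  exact edgeValue_eq_lineMap k t (σ i)

def permEdge (σ : Equiv.Perm (Fin n)) (k : ℕ) (h : k + 1 < n) : Set (Fin n → ℝ) :=
  segment ℝ (permVec σ) (permVec (adjSwap k h * σ))

lemma permSkel1_eq_iUnion_permEdge : permSkel1 n = ⋃ (σ) (k) (h : k + 1 < n), permEdge σ k h :=
  rfl

lemma permEdge_eq_image (h : k + 1 < n) (σ : Equiv.Perm (Fin n)) :
    permEdge σ k h = edgePoint σ k '' Set.Icc 0 1 := by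
  rw [permEdge, segment_eq_image_lineMap]
  simp only [edgePoint_eq_lineMap h]

lemma edgePoint_mem_permEdge (h : k + 1 < n) (σ : Equiv.Perm (Fin n))
    (ht : t ∈ Set.Icc (0 : ℝ) 1) : edgePoint σ k t ∈ permEdge σ k h :=
  permEdge_eq_image h σ ▸ ⟨t, ht, rfl⟩

lemma permEdge_subset_permSkel1 (h : k + 1 < n) (σ : Equiv.Perm (Fin n)) :
    permEdge σ k h ⊆ permSkel1 n := fun _ hv =>
  Set.mem_iUnion₂.2 ⟨σ, k, Set.mem_iUnion.2 ⟨h, hv⟩⟩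

lemma exists_edgePoint_of_mem_permSkel1 {v : Fin n → ℝ} (hv : v ∈ permSkel1 n) :
    ∃ (σ : Equiv.Perm (Fin n)) (k : ℕ) (t : ℝ),
      k + 1 < n ∧ t ∈ Set.Icc (0 : ℝ) (1 / 2) ∧ v = edgePoint σ k t := by
  simp only [permSkel1_eq_iUnion_permEdge, Set.mem_iUnion] at hv
  obtain ⟨σ, k, h, hv⟩ := hv
  obtain ⟨t, ⟨ht0, ht1⟩, rfl⟩ := permEdge_eq_image h σ ▸ hv
  rcases le_total t (1 / 2) with ht | ht
  · exact ⟨σ, k, t, h, ⟨ht0, ht⟩, rfl⟩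
  · refine ⟨adjSwap k h * σ, k, 1 - t, h, ⟨by linarith, by linarith⟩, ?_⟩
    rw [edgePoint_adjSwap_mul, sub_sub_cancel]

/-! ### Covering configurations with a fixed ordering -/

/-- Increasingly ordered centres of `n` intervals of radius `r` covering `[0,1]`, with
the outer intervals flush against the endpoints. -/
def coverSeqs (n : ℕ) (r : ℝ) : Set (ℕ → ℝ) :=
  {y | y 0 = r ∧ y (n - 1) = 1 - r ∧ MonotoneOn y (Set.Iio n) ∧
    ∀ p, p + 1 < n → y (p + 1) ≤ y p + 2 * r}

/-- Configurations in which the interval of rank `σ i` has label `i`. -/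
def rankCell (n : ℕ) (r : ℝ) (σ : Equiv.Perm (Fin n)) : Set (Fin n → ℝ) :=
  LinearMap.funLeft ℝ ℝ (fun i => (σ i : ℕ)) '' coverSeqs n r

lemma convex_coverSeqs : Convex ℝ (coverSeqs n r) := by
  rintro y ⟨hy0, hy1, hymono, hygap⟩ z ⟨hz0, hz1, hzmono, hzgap⟩ a b ha hb hab
  refine ⟨?_, ?_, fun p hp q hq hpq => ?_, fun p hp => ?_⟩
  · simp only [Pi.add_apply, Pi.smul_apply, smul_eq_mul, hy0, hz0]
    linear_combination r * hab
  · simp only [Pi.add_apply, Pi.smul_apply, smul_eq_mul, hy1, hz1]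
    linear_combination (1 - r) * hab
  · simp only [Pi.add_apply, Pi.smul_apply, smul_eq_mul]
    gcongr
    exacts [hymono hp hq hpq, hzmono hp hq hpq]
  · simp only [Pi.add_apply, Pi.smul_apply, smul_eq_mul]
    have hya := mul_le_mul_of_nonneg_left (hygap p hp) ha
    have hzb := mul_le_mul_of_nonneg_left (hzgap p hp) hb
    linear_combination hya + hzb + 2 * r * hab

lemma convex_rankCell (σ : Equiv.Perm (Fin n)) : Convex ℝ (rankCell n r σ) :=
  convex_coverSeqs.linear_image _

lemma mem_Icc_of_mem_coverSeqs (hy : y ∈ coverSeqs n r) {p : ℕ} (hp : p < n) :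
    y p ∈ Set.Icc r (1 - r) := by
  obtain ⟨hy0, hy1, hymono, -⟩ := hy
  constructor
  · rw [← hy0]; exact hymono (Set.mem_Iio.2 (by omega)) (Set.mem_Iio.2 hp) (Nat.zero_le p)
  · rw [← hy1]; exact hymono (Set.mem_Iio.2 hp) (Set.mem_Iio.2 (by omega)) (by omega)

lemma exists_mem_Icc_of_mem_coverSeqs (hn : 0 < n) (hy : y ∈ coverSeqs n r) {u : ℝ}
    (hu : u ∈ Set.Icc (0 : ℝ) 1) : ∃ p < n, u ∈ Set.Icc (y p - r) (y p + r) := by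
  obtain ⟨hy0, hy1, -, hygap⟩ := hy
  suffices ∀ m < n, u ≤ y m + r → ∃ p < n, u ∈ Set.Icc (y p - r) (y p + r) from
    this (n - 1) (by omega) (by linarith [hu.2])
  intro m
  induction m with
  | zero => exact fun hm hum => ⟨0, hm, by linarith [hu.1], hum⟩
  | succ m ih =>
    intro hm hum
    by_cases hu' : u ≤ y m + r
    · exact ih (by omega) hu'
    · exact ⟨m + 1, hm, by linarith [hygap m hm], hum⟩

lemma rankCell_subset_covI (hn : 0 < n) (σ : Equiv.Perm (Fin n)) :
    rankCell n r σ ⊆ CovI n r := by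
  rintro _ ⟨y, hy, rfl⟩
  refine ⟨fun i => ?_, fun u hu => ?_⟩
  · obtain ⟨h0, h1⟩ := mem_Icc_of_mem_coverSeqs hy (σ i).isLt
    exact Set.Icc_subset_Icc (by simp only [LinearMap.funLeft_apply]; linarith)
      (by simp only [LinearMap.funLeft_apply]; linarith)
  · obtain ⟨p, hp, hu⟩ := exists_mem_Icc_of_mem_coverSeqs hn hy hu
    exact Set.mem_iUnion.2 ⟨σ.symm ⟨p, hp⟩, by simpa using hu⟩

lemma mem_coverSeqs_of_cover (hy : MonotoneOn y (Set.Iio n))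
    (hsub : ∀ p < n, Set.Icc (y p - r) (y p + r) ⊆ Set.Icc 0 1)
    (hcov : ∀ u ∈ Set.Icc (0 : ℝ) 1, ∃ p < n, u ∈ Set.Icc (y p - r) (y p + r)) :
    y ∈ coverSeqs n r := by
  obtain ⟨q₀, hq₀, hq₀l, hq₀u⟩ := hcov 0 (by norm_num)
  obtain ⟨q₁, hq₁, hq₁l, hq₁u⟩ := hcov 1 (by norm_num)
  have hbound : ∀ p < n, r ≤ y p ∧ y p ≤ 1 - r := fun p hp => by
    have hl := (hsub p hp ⟨le_rfl, by linarith⟩).1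
    have hu := (hsub p hp ⟨by linarith, le_rfl⟩).2
    constructor <;> linarith
  have mono : ∀ {p q}, q < n → p ≤ q → y p ≤ y q := fun hq hpq =>
    hy (Set.mem_Iio.2 (hpq.trans_lt hq)) (Set.mem_Iio.2 hq) hpq
  refine ⟨?_, ?_, hy, fun p hp => ?_⟩
  · linarith [mono hq₀ (Nat.zero_le q₀), (hbound 0 (by omega)).1]
  · linarith [mono (p := q₁) (q := n - 1) (by omega) (by omega), (hbound (n - 1) (by omega)).2]
  · by_contra! hgap
    obtain ⟨q, hq, hql, hqu⟩ := hcov ((y p + y (p + 1)) / 2)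
      ⟨by linarith [(hbound p (by omega)).1], by linarith [(hbound (p + 1) hp).2]⟩
    rcases le_or_gt q p with hqp | hpq
    · linarith [mono (p := q) (q := p) (by omega) hqp]
    · linarith [mono (p := p + 1) (q := q) hq hpq]

lemma mem_rankCell_sort {x : Fin n → ℝ} (hx : x ∈ CovI n r) :
    x ∈ rankCell n r (Tuple.sort x).symm := by
  set y : ℕ → ℝ := fun p => if h : p < n then x (Tuple.sort x ⟨p, h⟩) else 0
  have hy : ∀ p (hp : p < n), y p = x (Tuple.sort x ⟨p, hp⟩) := fun p hp => dif_pos hp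
  refine ⟨y, mem_coverSeqs_of_cover ?_ (fun p hp => ?_) fun u hu => ?_, ?_⟩
  · intro p hp q hq hpq
    rw [hy p hp, hy q hq]
    exact Tuple.monotone_sort x (Fin.mk_le_mk.2 hpq)
  · rw [hy p hp]; exact hx.1 _
  · obtain ⟨i, hi⟩ := Set.mem_iUnion.1 (hx.2 hu)
    refine ⟨(Tuple.sort x).symm i, Fin.isLt _, ?_⟩
    rwa [hy _ (Fin.isLt _), Fin.eta, Equiv.apply_symm_apply]
  · funext i
    simp [hy]

/-- Chosen so that `2 * (2 * r - rampWidth n r)` is the total shortfall `2 * r * n - 1` of the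
`n - 1` gaps of a cover sequence below their maximal length `2 * r`: at most one gap can be
shorter than `rampWidth n r`. -/
noncomputable def rampWidth (n : ℕ) (r : ℝ) : ℝ := (1 - 2 * r * ((n : ℝ) - 2)) / 2

lemma not_two_gaps_lt_rampWidth (hy : y ∈ coverSeqs n r) {a b : ℕ} (ha : a + 1 < n)
    (hb : b + 1 < n) (hab : a ≠ b) (hya : y (a + 1) < y a + rampWidth n r)
    (hyb : y (b + 1) < y b + rampWidth n r) : False := by
  obtain ⟨hy0, hy1, -, hygap⟩ := hy
  have hsum : ∑ j ∈ Finset.range (n - 1), (2 * r - (y (j + 1) - y j)) = 2 * r * n - 1 := by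
    rw [Finset.sum_sub_distrib, Finset.sum_range_sub, hy0, hy1]
    rw [Finset.sum_const, Finset.card_range, nsmul_eq_mul, Nat.cast_sub (by omega), Nat.cast_one]
    ring
  have := Finset.add_le_sum (f := fun j => 2 * r - (y (j + 1) - y j))
    (fun j hj => by linarith [hygap j (by simp at hj; omega)])
    (Finset.mem_range.2 (by omega : a < n - 1)) (Finset.mem_range.2 (by omega : b < n - 1)) hab
  simp only [hsum, rampWidth] at this hya hyb
  linarith

lemma exists_separatedExcept (hn : 2 ≤ n) (hy : y ∈ coverSeqs n r) :
    ∃ k, k + 1 < n ∧ SeparatedExcept (rampWidth n r) n k y := by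
  by_cases hsmall : ∃ k, k + 1 < n ∧ y (k + 1) < y k + rampWidth n r
  · obtain ⟨k, hk, hyk⟩ := hsmall
    refine ⟨k, hk, separatedExcept_of_gaps hy.2.2.1 fun p hp hpk => ?_⟩
    by_contra! hyp
    exact not_two_gaps_lt_rampWidth hy hp hk hpk hyp hyk
  · push Not at hsmall
    exact ⟨0, by omega, separatedExcept_of_gaps hy.2.2.1 fun p hp _ => hsmall p hp⟩

/-! ### Configurations along an edge -/

noncomputable def spacing (n : ℕ) (r : ℝ) : ℝ := (1 - 2 * r) / ((n : ℝ) - 1)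

noncomputable def gapGrowth (n : ℕ) (r : ℝ) : ℝ := spacing n r / ((n : ℝ) - 2)

/-- Centres of rank `p` in the configuration attached to the point at parameter `t ≤ 1/2` of an
edge exchanging the ranks `k` and `k + 1`: the gap between them shrinks from `spacing n r` to `0`
while the other `n - 2` gaps grow by `2 * t * gapGrowth n r` each. -/
noncomputable def edgePos (n : ℕ) (r : ℝ) (k : ℕ) (t : ℝ) (p : ℕ) : ℝ :=
  r + p * spacing n r + 2 * t * gapGrowth n r * (p - if k + 1 ≤ p then (n : ℝ) - 1 else 0)

section Arithmetic

variable (hn : 2 ≤ n) (h1 : 1 ≤ 2 * r * ((n : ℝ) - 1)) (h3 : 2 * r ≤ 1)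
include hn

lemma sub_one_mul_spacing : ((n : ℝ) - 1) * spacing n r = 1 - 2 * r := by
  have : (2 : ℝ) ≤ n := by exact_mod_cast hn
  rw [spacing, mul_div_cancel₀ _ (by linarith)]

include h3

lemma spacing_nonneg : 0 ≤ spacing n r := by
  have : (2 : ℝ) ≤ n := by exact_mod_cast hn
  exact div_nonneg (by linarith) (by linarith)

lemma gapGrowth_nonneg : 0 ≤ gapGrowth n r := by
  have : (2 : ℝ) ≤ n := by exact_mod_cast hn
  exact div_nonneg (spacing_nonneg hn h3) (by linarith)

include h1

lemma sub_two_mul_gapGrowth : ((n : ℝ) - 2) * gapGrowth n r = spacing n r := by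
  rcases hn.eq_or_lt with rfl | hn3
  · have : 1 - 2 * r = 0 := by norm_num at h1; linarith
    simp [spacing, gapGrowth, this]
  · have : (3 : ℝ) ≤ n := by exact_mod_cast hn3
    rw [gapGrowth, mul_div_cancel₀ _ (by linarith)]

lemma spacing_add_gapGrowth_le : spacing n r + gapGrowth n r ≤ 2 * r := by
  rcases hn.eq_or_lt with rfl | hn3
  · norm_num [spacing, gapGrowth] at h1 ⊢; linarith
  · have : (3 : ℝ) ≤ n := by exact_mod_cast hn3
    have key : ((n : ℝ) - 2) * (spacing n r + gapGrowth n r) = 1 - 2 * r := by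
      rw [mul_add, sub_two_mul_gapGrowth hn h1 h3, ← sub_one_mul_spacing hn]; ring
    refine le_of_mul_le_mul_left ?_ (by linarith : (0 : ℝ) < n - 2)
    linarith

end Arithmetic

lemma rampWidth_pos (h2 : 2 * r * ((n : ℝ) - 2) < 1) : 0 < rampWidth n r := by
  rw [rampWidth]; linarith

lemma rampWidth_le_spacing (hn : 3 ≤ n) (h1 : 1 ≤ 2 * r * ((n : ℝ) - 1)) :
    rampWidth n r ≤ spacing n r := by
  have : (3 : ℝ) ≤ n := by exact_mod_cast hn
  have hr : 0 ≤ r := by nlinarith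
  rw [rampWidth, spacing, div_le_div_iff₀ (by norm_num) (by linarith)]
  nlinarith [mul_le_mul_of_nonneg_left h1 (by linarith : (0 : ℝ) ≤ n - 3),
    mul_nonneg hr (by linarith : (0 : ℝ) ≤ n - 3)]

section EdgePos

lemma edgePos_zero : edgePos n r k t 0 = r := by simp [edgePos]

lemma edgePos_sub_one (hk : k + 1 < n) : edgePos n r k t (n - 1) = 1 - r := by
  have hn : 2 ≤ n := by omega
  rw [edgePos, if_pos (by omega), Nat.cast_sub (by omega), Nat.cast_one,
    sub_one_mul_spacing hn]
  ring

lemma edgePos_succ (hn : 2 ≤ n) (h1 : 1 ≤ 2 * r * ((n : ℝ) - 1)) (h3 : 2 * r ≤ 1)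
    (p : ℕ) :
    edgePos n r k t (p + 1) = edgePos n r k t p +
      if p = k then (1 - 2 * t) * spacing n r else spacing n r + 2 * t * gapGrowth n r := by
  have hgrowth := sub_two_mul_gapGrowth hn h1 h3
  simp only [edgePos]
  split_ifs <;> first
    | omega
    | (subst_vars; push_cast; linear_combination (-2 * t) * hgrowth)
    | (push_cast; ring)

variable (hn : 2 ≤ n) (h1 : 1 ≤ 2 * r * ((n : ℝ) - 1)) (h3 : 2 * r ≤ 1)
  (ht : t ∈ Set.Icc (0 : ℝ) (1 / 2))
include hn h1 h3 ht

lemma monotoneOn_edgePos : MonotoneOn (edgePos n r k t) (Set.Iio n) := by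
  refine monotoneOn_Iio_of_le_add_one fun p _ => ?_
  rw [edgePos_succ hn h1 h3]
  have := spacing_nonneg hn h3
  have := gapGrowth_nonneg hn h3
  split_ifs <;> nlinarith [ht.1, ht.2]

lemma edgePos_mem_coverSeqs (hk : k + 1 < n) : edgePos n r k t ∈ coverSeqs n r := by
  refine ⟨edgePos_zero, edgePos_sub_one hk, monotoneOn_edgePos hn h1 h3 ht, fun p _ => ?_⟩
  rw [edgePos_succ hn h1 h3]
  have := spacing_nonneg hn h3
  have := gapGrowth_nonneg hn h3
  have := spacing_add_gapGrowth_le hn h1 h3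
  split_ifs <;> nlinarith [ht.1, ht.2]

lemma separatedExcept_edgePos (hk : k + 1 < n) :
    SeparatedExcept (rampWidth n r) n k (edgePos n r k t) := by
  refine separatedExcept_of_gaps (monotoneOn_edgePos hn h1 h3 ht) fun p hp hpk => ?_
  rw [edgePos_succ hn h1 h3, if_neg hpk]
  have := rampWidth_le_spacing (by omega) h1
  nlinarith [ht.1, gapGrowth_nonneg hn h3]

end EdgePos

lemma edgePos_half_succ (hn : 2 ≤ n) (h1 : 1 ≤ 2 * r * ((n : ℝ) - 1)) (h3 : 2 * r ≤ 1) :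
    edgePos n r k (1 / 2) (k + 1) = edgePos n r k (1 / 2) k := by
  rw [edgePos_succ hn h1 h3, if_pos rfl]
  ring

lemma exists_softRank_edgePos_eq_edgePoint (hn : 2 ≤ n) (h1 : 1 ≤ 2 * r * ((n : ℝ) - 1))
    (h2 : 2 * r * ((n : ℝ) - 2) < 1) (h3 : 2 * r ≤ 1) (hk : k + 1 < n)
    (σ : Equiv.Perm (Fin n)) (ht : t ∈ Set.Icc (0 : ℝ) (1 / 2)) :
    ∃ u ∈ Set.Icc (0 : ℝ) (1 / 2),
      softRank (rampWidth n r) (fun i => edgePos n r k t (σ i)) = edgePoint σ k u :=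
  ⟨_, ramp_sub_mem_Icc (rampWidth_pos h2).le
      (monotoneOn_edgePos hn h1 h3 ht (Set.mem_Iio.2 (by omega)) (Set.mem_Iio.2 hk) k.le_succ),
    softRank_eq_edgePoint (rampWidth_pos h2) (separatedExcept_edgePos hn h1 h3 ht hk) hk σ⟩

lemma exists_softRank_eq_edgePoint_of_mem_covI (hn : 2 ≤ n) (h2 : 2 * r * ((n : ℝ) - 2) < 1)
    {x : Fin n → ℝ} (hx : x ∈ CovI n r) :
    ∃ (σ : Equiv.Perm (Fin n)) (k : ℕ) (u : ℝ), k + 1 < n ∧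
      u ∈ Set.Icc (0 : ℝ) (1 / 2) ∧ x ∈ rankCell n r σ ∧
      softRank (rampWidth n r) x = edgePoint σ k u := by
  obtain ⟨σ, y, hy, rfl⟩ : ∃ σ, x ∈ rankCell n r σ := ⟨_, mem_rankCell_sort hx⟩
  obtain ⟨k, hk, hsep⟩ := exists_separatedExcept hn hy
  exact ⟨σ, k, _, hk, ramp_sub_mem_Icc (rampWidth_pos h2).le
    (hy.2.2.1 (Set.mem_Iio.2 (by omega)) (Set.mem_Iio.2 hk) k.le_succ), ⟨y, hy, rfl⟩,
    softRank_eq_edgePoint (rampWidth_pos h2) hsep hk σ⟩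

/-! ### Recovering the edge from a point of the skeleton -/

noncomputable def saw (x : ℝ) : ℝ := |x - round x|

/-- The rank `p` whose skeleton coordinate `p + 1` is nearest to `x` (ties rounded up). -/
noncomputable def nearRank (x : ℝ) : ℕ := (round x - 1).toNat

lemma saw_intCast_add (m : ℤ) {s : ℝ} (hs : |s| ≤ 1 / 2) : saw (m + s) = |s| := by
  rw [saw, round_intCast_add, Int.cast_add, add_sub_add_left_eq_sub, abs_sub_round_of_abs_le hs]

lemma nearRank_eq {m : ℕ} {x : ℝ} (hx : x ∈ Set.Ico ((m : ℝ) + 1 / 2) (m + 3 / 2)) :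
    nearRank x = m := by
  have : round x = ((m + 1 : ℕ) : ℤ) := round_eq_iff.2 ⟨by push_cast; linarith [hx.1],
    by push_cast; linarith [hx.2]⟩
  rw [nearRank, this]
  omega

lemma saw_edgeValue (ht : t ∈ Set.Icc (0 : ℝ) (1 / 2)) (p : ℕ) :
    saw (edgeValue k t p) = (if k = p then t else 0) + (if k + 1 = p then t else 0) := by
  have habs : |t| ≤ 1 / 2 := by rw [abs_of_nonneg ht.1]; exact ht.2
  simp only [edgeValue]
  split_ifs <;> first | omega | skip
  · rw [show (k : ℝ) + 1 + t = ((k + 1 : ℤ) : ℝ) + t by push_cast; ring,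
      saw_intCast_add _ habs, abs_of_nonneg ht.1]
    simp
  · rw [show (k : ℝ) + 2 - t = ((k + 2 : ℤ) : ℝ) + -t by push_cast; ring,
      saw_intCast_add _ (by rwa [abs_neg]), abs_neg, abs_of_nonneg ht.1]
    simp
  · rw [show (p : ℝ) + 1 = ((p + 1 : ℤ) : ℝ) + 0 by push_cast; ring,
      saw_intCast_add _ (by norm_num)]
    simp

lemma sum_edgeValue_mul_saw (hk : k + 1 < n) (ht : t ∈ Set.Icc (0 : ℝ) (1 / 2))
    (G : ℝ → ℝ) :
    ∑ p ∈ Finset.range n, G (edgeValue k t p) * saw (edgeValue k t p) =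
      (G (k + 1 + t) + G (k + 2 - t)) * t := by
  simp only [saw_edgeValue ht, mul_add, mul_ite, mul_zero, Finset.sum_add_distrib,
    Finset.sum_ite_eq, Finset.mem_range, hk, k.lt_succ_self.trans hk, if_true]
  simp only [edgeValue, if_pos, if_neg (Nat.succ_ne_self k)]
  ring

lemma sum_edgePoint (σ : Equiv.Perm (Fin n)) (F : ℝ → ℝ) :
    ∑ i, F (edgePoint σ k t i) = ∑ p ∈ Finset.range n, F (edgeValue k t p) :=
  (Equiv.sum_comp σ fun q => F (edgeValue k t q)).trans
    (Fin.sum_univ_eq_sum_range (fun p => F (edgeValue k t p)) n)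

lemma edgePos_nearRank_edgeValue (hn : 2 ≤ n) (h1 : 1 ≤ 2 * r * ((n : ℝ) - 1))
    (h3 : 2 * r ≤ 1) (ht : t ∈ Set.Icc (0 : ℝ) (1 / 2)) (p : ℕ) :
    edgePos n r k t (nearRank (edgeValue k t p)) = edgePos n r k t p := by
  obtain ⟨ht0, ht1⟩ := ht
  simp only [edgeValue]
  split_ifs with hpk hpk1
  · subst hpk
    rcases ht1.lt_or_eq with ht1 | rfl
    · rw [nearRank_eq (m := p) ⟨by linarith, by linarith⟩]
    · rw [nearRank_eq (m := p + 1) ⟨by push_cast; linarith, by push_cast; linarith⟩,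
        edgePos_half_succ hn h1 h3]
  · subst hpk1
    rw [nearRank_eq (m := k + 1) ⟨by push_cast; linarith, by push_cast; linarith⟩]
  · rw [nearRank_eq (m := p) ⟨by linarith, by linarith⟩]

/-- On the edge point `edgePoint σ k t` with `0 < t`, only the two moving coordinates
`k + 1 + t` and `k + 2 - t` have nonzero `saw`, so this weighted mean is `k + 3 / 2`. -/
noncomputable def sawCentre (v : Fin n → ℝ) : ℝ := (∑ j, v j * saw (v j)) / ∑ j, saw (v j)

/-- Reads off the parameter `t` of an edge point as half its total `saw` and the exchanged rank `k`
from its `sawCentre`. -/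
noncomputable def skelConfig (n : ℕ) (r : ℝ) (v : Fin n → ℝ) : Fin n → ℝ :=
  fun i => edgePos n r (⌊sawCentre v⌋₊ - 1) ((∑ j, saw (v j)) / 2) (nearRank (v i))

lemma sum_saw_edgePoint (hk : k + 1 < n) (σ : Equiv.Perm (Fin n))
    (ht : t ∈ Set.Icc (0 : ℝ) (1 / 2)) : ∑ i, saw (edgePoint σ k t i) = 2 * t := by
  have := sum_edgeValue_mul_saw hk ht fun _ => 1
  simp only [one_mul] at this
  rw [sum_edgePoint, this]
  ring

lemma floor_sawCentre_edgePoint (hk : k + 1 < n) (σ : Equiv.Perm (Fin n))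
    (ht : t ∈ Set.Ioc (0 : ℝ) (1 / 2)) : ⌊sawCentre (edgePoint σ k t)⌋₊ - 1 = k := by
  have ht' : t ∈ Set.Icc (0 : ℝ) (1 / 2) := Set.Ioc_subset_Icc_self ht
  have hcentre : sawCentre (edgePoint σ k t) = k + 1 + 1 / 2 := by
    have hsum := sum_edgeValue_mul_saw hk ht' fun x => x
    rw [sawCentre, sum_saw_edgePoint hk σ ht', sum_edgePoint σ fun x => x * saw x, hsum]
    field_simp [ht.1.ne']
    ring
  rw [hcentre, (Nat.floor_eq_iff (n := k + 1) (by positivity)).2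
    ⟨by push_cast; linarith, by push_cast; linarith⟩, Nat.add_sub_cancel]

lemma skelConfig_edgePoint (hn : 2 ≤ n) (h1 : 1 ≤ 2 * r * ((n : ℝ) - 1)) (h3 : 2 * r ≤ 1)
    (hk : k + 1 < n) (σ : Equiv.Perm (Fin n)) (ht : t ∈ Set.Icc (0 : ℝ) (1 / 2)) :
    skelConfig n r (edgePoint σ k t) = fun i => edgePos n r k t (σ i) := by
  funext i
  rw [skelConfig, sum_saw_edgePoint hk σ ht, mul_div_cancel_left₀ t two_ne_zero]
  rcases ht.1.eq_or_lt with rfl | ht0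
  · simp only [edgePos, mul_zero, zero_mul, add_zero, edgePoint, edgeValue_zero]
    rw [nearRank_eq (m := σ i) ⟨by linarith, by linarith⟩]
  · rw [floor_sawCentre_edgePoint hk σ ⟨ht0, ht.2⟩]
    exact edgePos_nearRank_edgeValue hn h1 h3 ht _

lemma edgePos_half_swap (hn : 2 ≤ n) (h1 : 1 ≤ 2 * r * ((n : ℝ) - 1)) (h3 : 2 * r ≤ 1)
    (k p : ℕ) :
    edgePos n r k (1 / 2) (Equiv.swap k (k + 1) p) = edgePos n r k (1 / 2) p := by
  rw [Equiv.swap_apply_def]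
  split_ifs with hpk hpk1
  · rw [hpk, edgePos_half_succ hn h1 h3]
  · rw [hpk1, edgePos_half_succ hn h1 h3]
  · rfl

lemma continuousOn_skelConfig_permEdge (hn : 2 ≤ n) (h1 : 1 ≤ 2 * r * ((n : ℝ) - 1))
    (h3 : 2 * r ≤ 1) (hk : k + 1 < n) (σ : Equiv.Perm (Fin n)) :
    ContinuousOn (skelConfig n r) (permEdge σ k hk) := by
  have hcont : ∀ τ : Equiv.Perm (Fin n), Continuous fun t => fun i => edgePos n r k t (τ i) :=
    fun τ => by unfold edgePos; fun_prop
  -- the edge seen from its two endpoints, glued at the midpoint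
  let Φ : ℝ → Fin n → ℝ := fun t =>
    if t ≤ 1 / 2 then fun i => edgePos n r k t (σ i)
    else fun i => edgePos n r k (1 - t) ((adjSwap k hk * σ) i)
  have hΦ : Continuous Φ := by
    refine Continuous.if_le (hcont σ) ((hcont _).comp (continuous_const.sub continuous_id))
      continuous_id continuous_const fun t ht => funext fun i => ?_
    simp only [ht, Equiv.Perm.mul_apply, coe_adjSwap_apply,
      show (1 : ℝ) - 1 / 2 = 1 / 2 by norm_num, edgePos_half_swap hn h1 h3]
  let i₀ := σ.symm ⟨k, Nat.lt_of_succ_lt hk⟩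
  have hproj : Continuous fun v : Fin n → ℝ => v i₀ - (k + 1) := by fun_prop
  refine (hΦ.comp hproj).continuousOn.congr ?_
  rw [permEdge_eq_image]
  rintro _ ⟨t, ⟨ht0, ht1⟩, rfl⟩
  have hi₀ : edgePoint σ k t i₀ - (k + 1) = t := by
    simp [i₀, edgePoint, edgeValue]
  simp only [Function.comp_apply, hi₀, Φ]
  split_ifs with ht
  · exact skelConfig_edgePoint hn h1 h3 hk σ ⟨ht0, ht⟩
  · have := skelConfig_edgePoint hn h1 h3 hk (adjSwap k hk * σ) (t := 1 - t)
      ⟨by linarith, by linarith⟩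
    rwa [edgePoint_adjSwap_mul, sub_sub_cancel] at this

lemma continuousOn_skelConfig (hn : 2 ≤ n) (h1 : 1 ≤ 2 * r * ((n : ℝ) - 1))
    (h3 : 2 * r ≤ 1) :
    ContinuousOn (skelConfig n r) (permSkel1 n) := by
  have : Finite {k : ℕ // k + 1 < n} :=
    Finite.of_injective (β := Fin n) (fun k => ⟨k.1, by omega⟩) fun a b h =>
      Subtype.ext (Fin.mk.inj_iff.1 h)
  have hclosed : ∀ σ (k : {k : ℕ // k + 1 < n}), IsClosed (permEdge σ k.1 k.2) := by
    intro σ k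
    rw [permEdge, ← convexHull_pair (𝕜 := ℝ)]
    exact (Set.toFinite _).isCompact_convexHull (𝕜 := ℝ) |>.isClosed
  have hskel : permSkel1 n = ⋃ (σ) (k : {k : ℕ // k + 1 < n}), permEdge σ k.1 k.2 := by
    simp only [permSkel1_eq_iUnion_permEdge, Set.iUnion_subtype]
  rw [hskel]
  exact (locallyFinite_of_finite _).continuousOn_iUnion
    (fun σ => isClosed_iUnion_of_finite (hclosed σ)) fun σ =>
      (locallyFinite_of_finite _).continuousOn_iUnion (hclosed σ) fun k =>
        continuousOn_skelConfig_permEdge hn h1 h3 k.2 σ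

lemma softRank_mem_permSkel1 (hn : 2 ≤ n) (h2 : 2 * r * ((n : ℝ) - 2) < 1) {x : Fin n → ℝ}
    (hx : x ∈ CovI n r) : softRank (rampWidth n r) x ∈ permSkel1 n := by
  obtain ⟨σ, k, u, hk, hu, -, hFx⟩ := exists_softRank_eq_edgePoint_of_mem_covI hn h2 hx
  rw [hFx]
  exact permEdge_subset_permSkel1 hk σ
    (edgePoint_mem_permEdge hk σ ⟨hu.1, by linarith [hu.2]⟩)

lemma skelConfig_mem_covI (hn : 2 ≤ n) (h1 : 1 ≤ 2 * r * ((n : ℝ) - 1)) (h3 : 2 * r ≤ 1)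
    {v : Fin n → ℝ} (hv : v ∈ permSkel1 n) : skelConfig n r v ∈ CovI n r := by
  obtain ⟨σ, k, t, hk, ht, rfl⟩ := exists_edgePoint_of_mem_permSkel1 hv
  rw [skelConfig_edgePoint hn h1 h3 hk σ ht]
  exact rankCell_subset_covI (by omega) σ ⟨_, edgePos_mem_coverSeqs hn h1 h3 ht hk, rfl⟩

section Assembly

variable (hn : 2 ≤ n) (h1 : 1 ≤ 2 * r * ((n : ℝ) - 1)) (h2 : 2 * r * ((n : ℝ) - 2) < 1)
  (h3 : 2 * r ≤ 1)
include hn h1 h2 h3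

lemma segment_skelConfig_softRank_subset_covI {x : Fin n → ℝ} (hx : x ∈ CovI n r) :
    segment ℝ (skelConfig n r (softRank (rampWidth n r) x)) x ⊆ CovI n r := by
  obtain ⟨σ, k, u, hk, hu, hxσ, hFx⟩ := exists_softRank_eq_edgePoint_of_mem_covI hn h2 hx
  have hGFx : skelConfig n r (softRank (rampWidth n r) x) ∈ rankCell n r σ := by
    rw [hFx, skelConfig_edgePoint hn h1 h3 hk σ hu]
    exact ⟨_, edgePos_mem_coverSeqs hn h1 h3 hu hk, rfl⟩
  exact ((convex_rankCell σ).segment_subset hGFx hxσ).trans (rankCell_subset_covI (by omega) σ)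

lemma segment_softRank_skelConfig_subset_permSkel1 {v : Fin n → ℝ} (hv : v ∈ permSkel1 n) :
    segment ℝ (softRank (rampWidth n r) (skelConfig n r v)) v ⊆ permSkel1 n := by
  obtain ⟨σ, k, t, hk, ht, rfl⟩ := exists_edgePoint_of_mem_permSkel1 hv
  obtain ⟨u, hu, hFG⟩ := exists_softRank_edgePos_eq_edgePoint hn h1 h2 h3 hk σ ht
  rw [skelConfig_edgePoint hn h1 h3 hk σ ht, hFG]
  refine ((convex_segment _ _).segment_subset ?_ ?_).trans (permEdge_subset_permSkel1 hk σ)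
  exacts [edgePoint_mem_permEdge hk σ ⟨hu.1, by linarith [hu.2]⟩,
    edgePoint_mem_permEdge hk σ ⟨ht.1, by linarith [ht.2]⟩]

end Assembly

end ExcessOne

open ExcessOne

theorem covI_excess_one_homotopyEquiv_permutahedron_skeleton_general
    (n : ℕ) (hn : 2 ≤ n) (r : ℝ)
    (h1 : 1 ≤ 2 * r * ((n : ℝ) - 1)) (h2 : 2 * r * ((n : ℝ) - 2) < 1)
    (h3 : 2 * r ≤ 1) :
    Nonempty (ContinuousMap.HomotopyEquiv (CovI n r) (permSkel1 n)) := by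
  have hF : Set.MapsTo (softRank (rampWidth n r)) (CovI n r) (permSkel1 n) :=
    fun _ => softRank_mem_permSkel1 hn h2
  have hG : Set.MapsTo (skelConfig n r) (permSkel1 n) (CovI n r) :=
    fun _ => skelConfig_mem_covI hn h1 h3
  let F : C(CovI n r, permSkel1 n) :=
    ⟨hF.restrict, (continuous_softRank _).continuousOn.mapsToRestrict hF⟩
  let G : C(permSkel1 n, CovI n r) :=
    ⟨hG.restrict, (continuousOn_skelConfig hn h1 h3).mapsToRestrict hG⟩
  exact ⟨⟨F, G,
    ContinuousMap.homotopic_of_segment_subset _ _ fun x =>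
      segment_skelConfig_softRank_subset_covI hn h1 h2 h3 x.2,
    ContinuousMap.homotopic_of_segment_subset _ _ fun v =>
      segment_softRank_skelConfig_subset_permSkel1 hn h1 h2 h3 v.2⟩⟩

theorem covI_excess_one_homotopyEquiv_permutahedron_skeleton
    (n : ℕ) (hn : 2 ≤ n) (r : ℝ) (hr : 0 < r)
    (h1 : 1 ≤ 2 * r * ((n : ℝ) - 1)) (h2 : 2 * r * ((n : ℝ) - 2) < 1)
    (h3 : 2 * r ≤ 1) :
    Nonempty (ContinuousMap.HomotopyEquiv (CovI n r) (permSkel1 n)) :=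
  covI_excess_one_homotopyEquiv_permutahedron_skeleton_general n hn r h1 h2 h3
end

section
/- Let n ≥ 2 and r > 0 satisfy 2·r·n ≥ 1 and 2·r ≤ 1 (so Cov_I(n,r) is nonempty). Then Cov_I(n,r) is path-connected if and only if 2·r·(n−1) ≥ 1 (i.e. if and only if there is at least one excess agent). -/
/-!
Listing the centres of a covering configuration in increasing order, the configurations with a
given order form a convex set (a chamber): the first centre is `r`, the last is `1 - r`, and
consecutive centres are at most `2r` apart. Cov_I(n,r) is the union of the `n!` chambers.

With an excess agent, `n - 1` intervals already cover `[0,1]`, so there is a covering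
configuration in which agents `k` and `k + 1` sit at the same point; it lies in both chambers
related by the adjacent transposition `(k k+1)`. Adjacent transpositions generate the symmetric
group, so all chambers are linked and the union is path-connected.

Without an excess agent, no two agents can ever share a position (the other `n - 1` intervals
would have total length `< 1`), so `x 0 - x 1` has constant sign along any path, while swapping
the two agents of a configuration changes it.
-/

open Set Function MeasureTheory

theorem IsPathConnected.iUnion_of_closure_eq_top {X M : Type*} [TopologicalSpace X] [Monoid M]
    {S : Set M} (hS : Submonoid.closure S = ⊤) {C : M → Set X}
    (hC : ∀ σ, IsPathConnected (C σ)) (hstep : ∀ σ, ∀ g ∈ S, (C σ ∩ C (σ * g)).Nonempty) :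
    IsPathConnected (⋃ σ, C σ) := by
  obtain ⟨x, hx⟩ := (hC 1).nonempty
  have hsub : ∀ σ, C σ ⊆ pathComponentIn (⋃ σ, C σ) x := fun σ ↦ by
    induction σ using Submonoid.induction_of_closure_eq_top_right hS with
    | one => exact (hC 1).subset_pathComponentIn hx (subset_iUnion C 1)
    | mul_right σ g hg ih =>
      obtain ⟨y, hyσ, hyσg⟩ := hstep σ g hg
      rw [← pathComponentIn_congr (ih hyσ)]
      exact (hC (σ * g)).subset_pathComponentIn hyσg (subset_iUnion C _)
  exact isPathConnected_iff_eq.2 ⟨x, mem_iUnion_of_mem 1 hx,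
    pathComponentIn_subset.antisymm (iUnion_subset hsub)⟩

theorem one_le_two_mul_card_of_Icc_subset_biUnion {ι : Type*} (s : Finset ι) (c : ι → ℝ) (r : ℝ)
    (h : Icc (0 : ℝ) 1 ⊆ ⋃ i ∈ s, Icc (c i - r) (c i + r)) : 1 ≤ 2 * r * s.card := by
  have hvol : volume (Icc (0 : ℝ) 1) ≤ ∑ i ∈ s, volume (Icc (c i - r) (c i + r)) :=
    (measure_mono h).trans (measure_biUnion_finset_le s _)
  simp only [Real.volume_Icc, sub_zero, ENNReal.ofReal_one, add_sub_sub_cancel, Finset.sum_const,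
    nsmul_eq_mul] at hvol
  rw [← ENNReal.ofReal_natCast, ← ENNReal.ofReal_mul (Nat.cast_nonneg _),
    ENNReal.one_le_ofReal] at hvol
  linarith

namespace CovI

variable {n m : ℕ} {r : ℝ}

def sorted (m : ℕ) (r : ℝ) : Set (Fin (m + 1) → ℝ) :=
  {y | Monotone y ∧ y 0 = r ∧ y (Fin.last m) = 1 - r ∧ ∀ i : Fin m, y i.succ ≤ y i.castSucc + 2 * r}

theorem comp_perm_mem {x : Fin n → ℝ} (hx : x ∈ CovI n r) (σ : Equiv.Perm (Fin n)) :
    x ∘ σ ∈ CovI n r :=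
  ⟨fun i ↦ hx.1 (σ i), hx.2.trans_eq (σ.iSup_comp (g := fun i ↦ Icc (x i - r) (x i + r))).symm⟩

theorem le_and_add_le_one (hr : 0 ≤ r) {x : Fin n → ℝ} (hx : x ∈ CovI n r) (i : Fin n) :
    r ≤ x i ∧ x i + r ≤ 1 :=
  have h := hx.1 i ⟨by linarith, le_rfl⟩
  have h' := hx.1 i ⟨le_rfl, by linarith⟩
  ⟨by linarith [h'.1], h.2⟩

theorem sorted_subset : sorted m r ⊆ CovI (m + 1) r := by
  rintro y ⟨hmono, h0, hlast, hgap⟩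
  refine ⟨fun i t ht ↦ ⟨?_, ?_⟩, fun t ht ↦ ?_⟩
  · linarith [ht.1, hmono (Fin.zero_le i)]
  · linarith [ht.2, hmono (Fin.le_last i)]
  by_contra hnot
  simp only [mem_iUnion, mem_Icc, not_exists, not_and_or, not_le] at hnot
  -- an uncovered point lies to the right of every interval, hence beyond `y last + r = 1`
  have hright : ∀ i, y i + r < t := fun i ↦ by
    induction i using Fin.induction with
    | zero => exact (hnot 0).resolve_left (by linarith [ht.1])
    | succ i ih => exact (hnot i.succ).resolve_left (by linarith [hgap i])
  linarith [hright (Fin.last m), ht.2]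

theorem convex_sorted : Convex ℝ (sorted m r) := by
  rintro y ⟨hmy, hy0, hyl, hyg⟩ z ⟨hmz, hz0, hzl, hzg⟩ a b ha hb hab
  refine ⟨fun i j hij ↦ ?_, ?_, ?_, fun i ↦ ?_⟩ <;>
    simp only [Pi.add_apply, Pi.smul_apply, smul_eq_mul]
  · gcongr <;> [exact hmy hij; exact hmz hij]
  · rw [hy0, hz0, ← add_mul, hab, one_mul]
  · rw [hyl, hzl, ← add_mul, hab, one_mul]
  · have h2r : 2 * r = a * (2 * r) + b * (2 * r) := by rw [← add_mul, hab, one_mul]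
    linarith [mul_le_mul_of_nonneg_left (hyg i) ha, mul_le_mul_of_nonneg_left (hzg i) hb]

theorem mem_sorted_of_monotone (hr : 0 ≤ r) {y : Fin (m + 1) → ℝ} (hy : y ∈ CovI (m + 1) r)
    (hmono : Monotone y) : y ∈ sorted m r := by
  have hbox := le_and_add_le_one hr hy
  refine ⟨hmono, ?_, ?_, fun i ↦ ?_⟩
  · obtain ⟨i, hi⟩ := mem_iUnion.1 (hy.2 ⟨le_rfl, zero_le_one⟩)
    linarith [(hbox 0).1, hmono (Fin.zero_le i), hi.1]
  · obtain ⟨i, hi⟩ := mem_iUnion.1 (hy.2 ⟨zero_le_one, le_rfl⟩)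
    linarith [(hbox (Fin.last m)).2, hmono (Fin.le_last i), hi.2]
  by_contra! hgap
  -- the midpoint of the gap between the intervals `i` and `i + 1` is not covered
  obtain ⟨j, hj⟩ := mem_iUnion.1 (hy.2 (show (y i.castSucc + y i.succ) / 2 ∈ Icc 0 1 from
    ⟨by linarith [(hbox i.castSucc).1], by linarith [(hbox i.succ).2]⟩))
  rcases le_or_gt j i.castSucc with hji | hij
  · linarith [hmono hji, hj.2]
  · linarith [hmono (Fin.castSucc_lt_iff_succ_le.1 hij), hj.1]

theorem exists_comp_perm_mem_sorted (hr : 0 ≤ r) {x : Fin (m + 1) → ℝ} (hx : x ∈ CovI (m + 1) r) :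
    ∃ σ : Equiv.Perm (Fin (m + 1)), x ∘ σ ∈ sorted m r :=
  ⟨Tuple.sort x, mem_sorted_of_monotone hr (comp_perm_mem hx _) (Tuple.monotone_sort x)⟩

theorem eq_iUnion_sorted (hr : 0 ≤ r) :
    CovI (m + 1) r = ⋃ σ : Equiv.Perm (Fin (m + 1)), (· ∘ σ) ⁻¹' sorted m r := by
  ext x
  simp only [mem_iUnion, mem_preimage]
  refine ⟨exists_comp_perm_mem_sorted hr, fun ⟨σ, hσ⟩ ↦ ?_⟩
  simpa [comp_assoc] using comp_perm_mem (sorted_subset hσ) σ⁻¹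

noncomputable def packed (r : ℝ) (g : Fin (m + 1) → ℕ) : Fin (m + 1) → ℝ :=
  fun j ↦ min (r + 2 * r * g j) (1 - r)

theorem packed_mem_sorted (hr : 0 ≤ r) (h2 : 2 * r ≤ 1) {g : Fin (m + 1) → ℕ} (hmono : Monotone g)
    (h0 : g 0 = 0) (hstep : ∀ i : Fin m, g i.succ ≤ g i.castSucc + 1)
    (hlast : 1 ≤ 2 * r * (g (Fin.last m) + 1)) : packed r g ∈ sorted m r := by
  refine ⟨fun i j hij ↦ ?_, ?_, ?_, fun i ↦ ?_⟩ <;> simp only [packed]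
  · gcongr
    exact hmono hij
  · rw [h0, Nat.cast_zero, mul_zero, add_zero, min_eq_left (by linarith)]
  · exact min_eq_right (by linarith)
  · have hi : (g i.succ : ℝ) ≤ g i.castSucc + 1 := by exact_mod_cast hstep i
    calc min (r + 2 * r * g i.succ) (1 - r)
        ≤ min (r + 2 * r * g i.castSucc + 2 * r) (1 - r + 2 * r) :=
          min_le_min (by nlinarith) (by linarith)
      _ = _ := min_add_add_right _ _ _

-- `k.predAbove` sends both `k` and `k + 1` to `k`, so these two intervals coincide.
theorem packed_predAbove_comp_swap (k : Fin (m + 1)) :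
    packed r (fun j ↦ k.predAbove j) ∘ Equiv.swap k.castSucc k.succ =
      packed r (fun j ↦ k.predAbove j) := by
  ext j
  rcases eq_or_ne j k.castSucc with rfl | h1
  · simp [packed]
  rcases eq_or_ne j k.succ with rfl | h2
  · simp [packed]
  · simp [Equiv.swap_apply_of_ne_of_ne h1 h2]

theorem packed_predAbove_mem_sorted (hr : 0 ≤ r) (h2 : 2 * r ≤ 1) (hexc : 1 ≤ 2 * r * (m + 1))
    (k : Fin (m + 1)) : packed r (fun j ↦ k.predAbove j) ∈ sorted (m + 1) r := by
  refine packed_mem_sorted hr h2 (Fin.val_strictMono.monotone.comp k.predAbove_right_monotone)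
    (by simp) (fun i ↦ ?_) (by simpa using hexc)
  simp only [Fin.predAbove, Fin.lt_def, Fin.val_castSucc, Fin.val_succ]
  split_ifs <;> simp only [Fin.val_pred, Fin.coe_castPred, Fin.val_succ, Fin.val_castSucc] <;> omega

theorem isPathConnected_of_one_le (hr : 0 ≤ r) (h2 : 2 * r ≤ 1) (hexc : 1 ≤ 2 * r * (m + 1)) :
    IsPathConnected (CovI (m + 2) r) := by
  rw [eq_iUnion_sorted hr]
  have hub (σ : Equiv.Perm (Fin (m + 2))) (k : Fin (m + 1)) :
      packed r (fun j ↦ k.predAbove j) ∘ σ.symm ∈ (· ∘ σ) ⁻¹' sorted (m + 1) r := by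
    simpa [comp_assoc] using packed_predAbove_mem_sorted hr h2 hexc k
  refine IsPathConnected.iUnion_of_closure_eq_top (Equiv.Perm.mclosure_swap_castSucc_succ (m + 1))
    (fun σ ↦ (convex_sorted.linear_preimage (LinearMap.funLeft ℝ ℝ σ)).isPathConnected
      ⟨_, hub σ 0⟩) ?_
  rintro σ _ ⟨k, rfl⟩
  refine ⟨_, hub σ k, ?_⟩
  have hcancel : packed r (fun j ↦ k.predAbove j) ∘ σ.symm ∘ (σ * Equiv.swap k.castSucc k.succ) =
      packed r (fun j ↦ k.predAbove j) ∘ Equiv.swap k.castSucc k.succ := by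
    ext j
    simp
  rw [mem_preimage, comp_assoc, hcancel, packed_predAbove_comp_swap]
  exact packed_predAbove_mem_sorted hr h2 hexc k

theorem injective_of_lt (hlt : 2 * r * n < 1) {x : Fin (n + 1) → ℝ} (hx : x ∈ CovI (n + 1) r) :
    Injective x := by
  intro i j hij
  by_contra hne
  refine ((one_le_two_mul_card_of_Icc_subset_biUnion (Finset.univ.erase i) x r ?_).trans_lt
    (by simpa [Finset.card_erase_of_mem])).false
  intro t ht
  obtain ⟨l, hl⟩ := mem_iUnion.1 (hx.2 ht)
  by_cases hli : l = i
  · subst hli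
    exact mem_biUnion (Finset.mem_erase.2 ⟨Ne.symm hne, Finset.mem_univ j⟩) (hij ▸ hl)
  · exact mem_biUnion (Finset.mem_erase.2 ⟨hli, Finset.mem_univ l⟩) hl

theorem not_isPathConnected_of_lt (hr : 0 ≤ r) (h2 : 2 * r ≤ 1) (h1 : 1 ≤ 2 * r * (m + 2))
    (hlt : 2 * r * (m + 1) < 1) : ¬ IsPathConnected (CovI (m + 2) r) := by
  intro hpc
  have hx := packed_mem_sorted (m := m + 1) (g := fun j ↦ j) hr h2 Fin.val_strictMono.monotone rfl
    (fun i ↦ by simp) (by push_cast; linarith)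
  obtain ⟨z, hz, hz01⟩ := hpc.isConnected.isPreconnected.intermediate_value (f := fun x ↦ x 0 - x 1)
    (sorted_subset hx) (comp_perm_mem (sorted_subset hx) (Equiv.swap 0 1)) (by fun_prop)
    (show (0 : ℝ) ∈ _ from
      ⟨by simpa using hx.1 (Fin.zero_le 1), by simpa using hx.1 (Fin.zero_le 1)⟩)
  exact zero_ne_one (injective_of_lt (by exact_mod_cast hlt) hz (sub_eq_zero.1 hz01))

end CovI

theorem covI_pathConnected_iff_excess (n : ℕ) (hn : 2 ≤ n) (r : ℝ) (hr : 0 < r)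
    (h1 : 1 ≤ 2 * r * (n : ℝ)) (h2 : 2 * r ≤ 1) :
    PathConnectedSpace (CovI n r) ↔ 1 ≤ 2 * r * ((n : ℝ) - 1) := by
  obtain ⟨m, rfl⟩ : ∃ m, n = m + 2 := ⟨n - 2, by omega⟩
  rw [← isPathConnected_iff_pathConnectedSpace]
  push_cast at h1 ⊢
  refine ⟨fun hpc ↦ ?_, fun hexc ↦ CovI.isPathConnected_of_one_le hr.le h2 (by linarith)⟩
  by_contra! hlt
  exact CovI.not_isPathConnected_of_lt hr.le h2 h1 (by linarith) hpc
end

section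
/- Let S ⊆ ℤ × ℤ be a finite nonempty edge-connected polyomino with no diagonal pinch, with A = |S| cells, E adjacent pairs, and K fully-occupied 2×2 blocks. Let V' be the number of lattice points of ℤ × ℤ that are corners of some cell of S (i.e. points of the form c, c+(1,0), c+(0,1), or c+(1,1) for some c ∈ S), and let E' be the number of unit lattice edges that are edges of some cell of S (a horizontal edge from v to v+(1,0) is an edge of the cells v and v−(0,1); a vertical edge from v to v+(0,1) is an edge of the cells v and v−(1,0)). Then V' − E' + A = A − E + K. (Equivalently, in the paper's notation: K = χ(G_S) − A + Σ_i n_i(i−1), where χ(G_S) = V' − E' + A is the Euler characteristic of the union of squares G_S and Σ_i n_i(i−1) = E counts the edges of all maximal horizontal and vertical crossings.) -/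
/-- Two cells of `ℤ × ℤ` are adjacent if they are at `ℓ¹`-distance 1. -/
def AdjCells (c d : ℤ × ℤ) : Prop := |c.1 - d.1| + |c.2 - d.2| = 1

/-- A polyomino is edge-connected if the graph joining cells at `ℓ¹`-distance 1
is connected. -/
def EdgeConnected (S : Finset (ℤ × ℤ)) : Prop :=
  (SimpleGraph.fromRel (fun c d : {x // x ∈ S} => AdjCells c.1 d.1)).Connected

/-- A polyomino has no diagonal pinch if each diagonally adjacent pair of its cells
is accompanied by one of the two cells completing the 2×2 block. -/
def NoDiagonalPinch (S : Finset (ℤ × ℤ)) : Prop :=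
  ∀ v : ℤ × ℤ,
    (v ∈ S → v + (1, 1) ∈ S → (v + (1, 0) ∈ S ∨ v + (0, 1) ∈ S)) ∧
    (v + (1, 0) ∈ S → v + (0, 1) ∈ S → (v ∈ S ∨ v + (1, 1) ∈ S))

lemma mem_image_add_iff (S : Finset (ℤ × ℤ)) (u v c : ℤ × ℤ) (h : u + v = 0) :
    c ∈ S.image (· + u) ↔ c + v ∈ S := by
  simp only [Finset.mem_image]
  constructor
  · rintro ⟨a, ha, rfl⟩
    rwa [add_assoc, h, add_zero]
  · intro hc
    exact ⟨c + v, hc, by rw [add_assoc, show v + u = 0 by rw [add_comm]; exact h, add_zero]⟩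

lemma pointwise_count (p q r s : Prop) [Decidable p] [Decidable q] [Decidable r] [Decidable s]
    (hc : p ∨ q ∨ r ∨ s) (h1 : p → s → q ∨ r) (h2 : q → r → p ∨ s) :
    1 + ((if p ∧ q then 1 else 0) + (if r ∧ s then 1 else 0) + (if p ∧ r then 1 else 0)
      + (if q ∧ s then 1 else 0))
    = (if p then 1 else 0) + (if q then 1 else 0) + (if r then 1 else 0) + (if s then 1 else 0)
      + (if p ∧ q ∧ r ∧ s then (1 : ℕ) else 0) := by
  by_cases hp : p <;> by_cases hq : q <;> by_cases hr : r <;> by_cases hs : s <;> simp_all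

lemma add_add_eq (c : ℤ × ℤ) {u v w : ℤ × ℤ} (h : u + v = w) : c + u + v = c + w := by
  rw [add_assoc, h]

theorem polyomino_euler_crossing_formula (S : Finset (ℤ × ℤ))
    (hne : S.Nonempty) (hconn : EdgeConnected S) (hpinch : NoDiagonalPinch S)
    (A E K V' E' : ℕ)
    (hA : A = S.card)
    (hE : E = (S.filter (fun c => c + (1, 0) ∈ S)).card +
      (S.filter (fun c => c + (0, 1) ∈ S)).card)
    (hK : K = (S.filter (fun c =>
      c + (1, 0) ∈ S ∧ c + (0, 1) ∈ S ∧ c + (1, 1) ∈ S)).card)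
    (hV' : V' = (S ∪ S.image (· + (1, 0)) ∪ S.image (· + (0, 1)) ∪
      S.image (· + (1, 1))).card)
    (hE' : E' = (S ∪ S.image (· + (0, 1))).card + (S ∪ S.image (· + (1, 0))).card) :
    (V' : ℤ) - E' + A = (A : ℤ) - E + K := by
  classical
  set B : Finset (ℤ × ℤ) :=
    (S ∪ S.image (· + (1, 0)) ∪ S.image (· + (0, 1)) ∪ S.image (· + (1, 1))).image
      (· + (-1, -1)) with hBdef
  have hB : ∀ c : ℤ × ℤ, c ∈ B ↔
      (c ∈ S ∨ c + (1, 0) ∈ S ∨ c + (0, 1) ∈ S ∨ c + (1, 1) ∈ S) := by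
    intro c
    rw [hBdef, mem_image_add_iff _ _ (1, 1) _ (by decide)]
    simp only [Finset.mem_union,
      mem_image_add_iff _ ((1 : ℤ), (0 : ℤ)) (-1, 0) _ (by decide),
      mem_image_add_iff _ ((0 : ℤ), (1 : ℤ)) (0, -1) _ (by decide),
      mem_image_add_iff _ ((1 : ℤ), (1 : ℤ)) (-1, -1) _ (by decide),
      add_add_eq c (show ((1 : ℤ), (1 : ℤ)) + (-1, 0) = (0, 1) by decide),
      add_add_eq c (show ((1 : ℤ), (1 : ℤ)) + (0, -1) = (1, 0) by decide),
      add_add_eq c (show ((1 : ℤ), (1 : ℤ)) + (-1, -1) = 0 by decide),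
      add_zero]
    tauto
  -- shorthand cards
  have cardim : ∀ (X : Finset (ℤ × ℤ)) (t : ℤ × ℤ), (X.image (· + t)).card = X.card :=
    fun X t => Finset.card_image_of_injective _ (add_left_injective t)
  have cV : V' = B.card := by rw [hV', hBdef, cardim]
  -- filter identifications
  have cP : (B.filter (fun c => c ∈ S)).card = S.card := by
    congr 1; ext c; simp only [Finset.mem_filter, hB]; tauto
  have cQ : (B.filter (fun c => c + (1, 0) ∈ S)).card = S.card := by
    rw [show B.filter (fun c => c + (1, 0) ∈ S) = S.image (· + (-1, 0)) by
      ext c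
      rw [mem_image_add_iff _ _ (1, 0) _ (by decide)]
      simp only [Finset.mem_filter, hB]; tauto, cardim]
  have cR : (B.filter (fun c => c + (0, 1) ∈ S)).card = S.card := by
    rw [show B.filter (fun c => c + (0, 1) ∈ S) = S.image (· + (0, -1)) by
      ext c
      rw [mem_image_add_iff _ _ (0, 1) _ (by decide)]
      simp only [Finset.mem_filter, hB]; tauto, cardim]
  have cS' : (B.filter (fun c => c + (1, 1) ∈ S)).card = S.card := by
    rw [show B.filter (fun c => c + (1, 1) ∈ S) = S.image (· + (-1, -1)) by
      ext c
      rw [mem_image_add_iff _ _ (1, 1) _ (by decide)]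
      simp only [Finset.mem_filter, hB]; tauto, cardim]
  have cPQ : (B.filter (fun c => c ∈ S ∧ c + (1, 0) ∈ S)).card
      = (S.filter (fun c => c + (1, 0) ∈ S)).card := by
    congr 1; ext c; simp only [Finset.mem_filter, hB]; tauto
  have cPR : (B.filter (fun c => c ∈ S ∧ c + (0, 1) ∈ S)).card
      = (S.filter (fun c => c + (0, 1) ∈ S)).card := by
    congr 1; ext c; simp only [Finset.mem_filter, hB]; tauto
  have cRS : (B.filter (fun c => c + (0, 1) ∈ S ∧ c + (1, 1) ∈ S)).card
      = (S.filter (fun c => c + (1, 0) ∈ S)).card := by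
    rw [show B.filter (fun c => c + (0, 1) ∈ S ∧ c + (1, 1) ∈ S)
        = (S.filter (fun c => c + (1, 0) ∈ S)).image (· + (0, -1)) by
      ext c
      rw [mem_image_add_iff _ _ (0, 1) _ (by decide)]
      simp only [Finset.mem_filter,
        add_add_eq c (show ((0 : ℤ), (1 : ℤ)) + (1, 0) = (1, 1) by decide)]
      simp only [Finset.mem_filter, hB]; tauto, cardim]
  have cQS : (B.filter (fun c => c + (1, 0) ∈ S ∧ c + (1, 1) ∈ S)).card
      = (S.filter (fun c => c + (0, 1) ∈ S)).card := by
    rw [show B.filter (fun c => c + (1, 0) ∈ S ∧ c + (1, 1) ∈ S)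
        = (S.filter (fun c => c + (0, 1) ∈ S)).image (· + (-1, 0)) by
      ext c
      rw [mem_image_add_iff _ _ (1, 0) _ (by decide)]
      simp only [Finset.mem_filter,
        add_add_eq c (show ((1 : ℤ), (0 : ℤ)) + (0, 1) = (1, 1) by decide)]
      simp only [Finset.mem_filter, hB]; tauto, cardim]
  have cK : (B.filter (fun c => c ∈ S ∧ c + (1, 0) ∈ S ∧ c + (0, 1) ∈ S ∧ c + (1, 1) ∈ S)).card
      = (S.filter (fun c => c + (1, 0) ∈ S ∧ c + (0, 1) ∈ S ∧ c + (1, 1) ∈ S)).card := by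
    congr 1; ext c; simp only [Finset.mem_filter, hB]; tauto
  have main : B.card
      + ((B.filter (fun c => c ∈ S ∧ c + (1, 0) ∈ S)).card
        + (B.filter (fun c => c + (0, 1) ∈ S ∧ c + (1, 1) ∈ S)).card
        + (B.filter (fun c => c ∈ S ∧ c + (0, 1) ∈ S)).card
        + (B.filter (fun c => c + (1, 0) ∈ S ∧ c + (1, 1) ∈ S)).card)
      = (B.filter (fun c => c ∈ S)).card + (B.filter (fun c => c + (1, 0) ∈ S)).card
        + (B.filter (fun c => c + (0, 1) ∈ S)).card + (B.filter (fun c => c + (1, 1) ∈ S)).card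
        + (B.filter (fun c => c ∈ S ∧ c + (1, 0) ∈ S ∧ c + (0, 1) ∈ S ∧ c + (1, 1) ∈ S)).card := by
    rw [Finset.card_eq_sum_ones B]
    simp only [Finset.card_filter]
    rw [← Finset.sum_add_distrib, ← Finset.sum_add_distrib, ← Finset.sum_add_distrib,
      ← Finset.sum_add_distrib, ← Finset.sum_add_distrib, ← Finset.sum_add_distrib,
      ← Finset.sum_add_distrib, ← Finset.sum_add_distrib]
    refine Finset.sum_congr rfl fun c hc => ?_
    rw [hB] at hc
    obtain ⟨h1, h2⟩ := hpinch c
    exact pointwise_count _ _ _ _ hc h1 h2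
  rw [cPQ, cRS, cPR, cQS, cP, cQ, cR, cS', cK] at main
  have hIv : (S ∩ S.image (· + (0, 1))).card = (S.filter (fun c => c + (0, 1) ∈ S)).card := by
    rw [show S ∩ S.image (· + (0, 1)) = (S.filter (fun c => c + (0, 1) ∈ S)).image (· + (0, 1)) by
      ext v
      simp only [Finset.mem_inter, Finset.mem_filter,
        mem_image_add_iff _ ((0 : ℤ), (1 : ℤ)) (0, -1) _ (by decide),
        add_add_eq v (show ((0 : ℤ), (-1 : ℤ)) + (0, 1) = 0 by decide), add_zero]
      tauto, cardim]
  have hIh : (S ∩ S.image (· + (1, 0))).card = (S.filter (fun c => c + (1, 0) ∈ S)).card := by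
    rw [show S ∩ S.image (· + (1, 0)) = (S.filter (fun c => c + (1, 0) ∈ S)).image (· + (1, 0)) by
      ext v
      simp only [Finset.mem_inter, Finset.mem_filter,
        mem_image_add_iff _ ((1 : ℤ), (0 : ℤ)) (-1, 0) _ (by decide),
        add_add_eq v (show ((-1 : ℤ), (0 : ℤ)) + (1, 0) = 0 by decide), add_zero]
      tauto, cardim]
  have hUv : (S ∪ S.image (· + (0, 1))).card + (S.filter (fun c => c + (0, 1) ∈ S)).card
      = S.card + S.card := by
    rw [← hIv, Finset.card_union_add_card_inter, cardim]
  have hUh : (S ∪ S.image (· + (1, 0))).card + (S.filter (fun c => c + (1, 0) ∈ S)).card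
      = S.card + S.card := by
    rw [← hIh, Finset.card_union_add_card_inter, cardim]
  omega
end
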